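/- arXiv:1504.00534 — 10 statements merged into one kernel-verified Lean document; each statement's English description precedes it below -/
import Mathlib

section
/- Suppose ℛ₁ is a random subset of {1,…,m} that is a measurable function of (P₁,P₂) such that, for almost every fixed value p₂ of P₂, the conditional probability given P₂=p₂ that ℛ₁ contains some feature j with H_{1j}=0 is at most α₁; and symmetrically ℛ₂ is a random subset such that for almost every fixed value p₁ of P₁, the conditional probability given P₁=p₁ that ℛ₂ contains some feature j with H_{2j}=0 is at most α₂ = α−α₁. Then the rejection set ℛ = ℛ₁ ∩ ℛ₂ has FWER for replicability analysis at most α; that is, Pr(ℛ contains some feature j with (H_{1j},H_{2j}) ≠ (1,1)) ≤ α. (Theorem 1, abstract form: a two-stage procedure whose first-stage rules control FWER conditionally on the other study yields FWER control for replicability.) -/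
open MeasureTheory ProbabilityTheory

/-!
A replicability null is null in study 1 or in study 2, so a false replicability rejection
by `R1 ∩ R2` is a false rejection by `R1` among the study-1 nulls or by `R2` among the
study-2 nulls. Averaging the conditional bounds (tower property) bounds the probabilities
of these two events by `α₁` and `α - α₁`, and the union bound adds them up to `α`.
-/

theorem measureReal_le_of_ae_condExp_indicator_le {Ω : Type*} {m m₀ : MeasurableSpace Ω}
    {μ : Measure[m₀] Ω} [IsProbabilityMeasure μ] (hm : m ≤ m₀) {A : Set Ω}
    (hA : MeasurableSet[m₀] A) {c : ℝ}
    (h : ∀ᵐ ω ∂μ, (μ[A.indicator (fun _ => (1 : ℝ)) | m]) ω ≤ c) :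
    μ.real A ≤ c :=
  calc μ.real A = ∫ ω, A.indicator (fun _ => (1 : ℝ)) ω ∂μ := (integral_indicator_one hA).symm
    _ = ∫ ω, (μ[A.indicator (fun _ => (1 : ℝ)) | m]) ω ∂μ := (integral_condExp hm).symm
    _ ≤ ∫ _, c ∂μ := integral_mono_ae integrable_condExp (integrable_const c) h
    _ = c := by simp

theorem measurableSet_exists_and_mem {Ω ι : Type*} [MeasurableSpace Ω] [Countable ι]
    {R : Ω → Set ι} (hR : ∀ j, MeasurableSet {ω | j ∈ R ω}) (p : ι → Prop) :
    MeasurableSet {ω | ∃ j, p j ∧ j ∈ R ω} :=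
  measurableSet_setOfPred.mpr <| Measurable.exists fun j =>
    (measurable_const (a := p j)).and (measurableSet_setOfPred.mp (hR j))

theorem fwer_replicability_of_conditional_control_general
    {Ω : Type*} [MeasurableSpace Ω] (μ : Measure Ω) [IsProbabilityMeasure μ]
    (m : ℕ) (P1 P2 : Ω → Fin m → ℝ) (hP1 : Measurable P1) (hP2 : Measurable P2)
    (H1 H2 : Fin m → Bool)
    (R1 R2 : Ω → Set (Fin m))
    (hR1meas : ∀ j, MeasurableSet[MeasurableSpace.comap (fun ω => (P1 ω, P2 ω)) inferInstance]
      {ω | j ∈ R1 ω})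
    (hR2meas : ∀ j, MeasurableSet[MeasurableSpace.comap (fun ω => (P1 ω, P2 ω)) inferInstance]
      {ω | j ∈ R2 ω})
    (α α₁ : ℝ)
    (hcond1 : ∀ᵐ ω ∂μ,
      (μ[Set.indicator {ω' | ∃ j, H1 j = false ∧ j ∈ R1 ω'} (fun _ => (1:ℝ)) |
        MeasurableSpace.comap P2 inferInstance]) ω ≤ α₁)
    (hcond2 : ∀ᵐ ω ∂μ,
      (μ[Set.indicator {ω' | ∃ j, H2 j = false ∧ j ∈ R2 ω'} (fun _ => (1:ℝ)) |
        MeasurableSpace.comap P1 inferInstance]) ω ≤ α - α₁) :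
    μ {ω | ∃ j, (H1 j = false ∨ H2 j = false) ∧ j ∈ R1 ω ∧ j ∈ R2 ω}
      ≤ ENNReal.ofReal α := by
  have hP := (hP1.prodMk hP2).comap_le
  have hA := measurableSet_exists_and_mem (fun j => hP _ (hR1meas j)) (H1 · = false)
  have hB := measurableSet_exists_and_mem (fun j => hP _ (hR2meas j)) (H2 · = false)
  have hμA := measureReal_le_of_ae_condExp_indicator_le hP2.comap_le hA hcond1
  have hμB := measureReal_le_of_ae_condExp_indicator_le hP1.comap_le hB hcond2
  have hsub : {ω | ∃ j, (H1 j = false ∨ H2 j = false) ∧ j ∈ R1 ω ∧ j ∈ R2 ω} ⊆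
      {ω | ∃ j, H1 j = false ∧ j ∈ R1 ω} ∪ {ω | ∃ j, H2 j = false ∧ j ∈ R2 ω} := by
    rintro ω ⟨j, hj | hj, hj₁, hj₂⟩
    exacts [Or.inl ⟨j, hj, hj₁⟩, Or.inr ⟨j, hj, hj₂⟩]
  rw [← ofReal_measureReal]
  refine ENNReal.ofReal_le_ofReal ?_
  calc _ ≤ _ := measureReal_mono hsub
    _ ≤ _ := measureReal_union_le _ _
    _ ≤ α := by linarith

/-- Theorem 1, abstract form. Two studies examine `m` features with
p-value vectors `P1, P2 : Ω → Fin m → ℝ` and null indicators `H1, H2 : Fin m → Bool`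
(`false` means the feature is null in that study; feature `j` is a replicability null
when `H1 j = false ∨ H2 j = false`).  Suppose `R1` is a random subset of the features,
measurable with respect to `(P1, P2)`, such that for almost every value of `P2` the
conditional probability given `P2` that `R1` contains some feature `j` with `H1 j = false`
is at most `α₁`; and symmetrically `R2` with bound `α − α₁` conditionally on `P1`.
Then the rejection set `R1 ∩ R2` has FWER for replicability analysis at most `α`. -/
theorem fwer_replicability_of_conditional_control
    {Ω : Type*} [MeasurableSpace Ω] (μ : Measure Ω) [IsProbabilityMeasure μ]
    (m : ℕ) (P1 P2 : Ω → Fin m → ℝ) (hP1 : Measurable P1) (hP2 : Measurable P2)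
    (H1 H2 : Fin m → Bool)
    (R1 R2 : Ω → Set (Fin m))
    (hR1meas : ∀ j, MeasurableSet[MeasurableSpace.comap (fun ω => (P1 ω, P2 ω)) inferInstance]
      {ω | j ∈ R1 ω})
    (hR2meas : ∀ j, MeasurableSet[MeasurableSpace.comap (fun ω => (P1 ω, P2 ω)) inferInstance]
      {ω | j ∈ R2 ω})
    (α α₁ : ℝ) (hα : α ∈ Set.Ioo (0:ℝ) 1) (hα₁ : α₁ ∈ Set.Ioo (0:ℝ) α)
    (hcond1 : ∀ᵐ ω ∂μ,
      (μ[Set.indicator {ω' | ∃ j, H1 j = false ∧ j ∈ R1 ω'} (fun _ => (1:ℝ)) |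
        MeasurableSpace.comap P2 inferInstance]) ω ≤ α₁)
    (hcond2 : ∀ᵐ ω ∂μ,
      (μ[Set.indicator {ω' | ∃ j, H2 j = false ∧ j ∈ R2 ω'} (fun _ => (1:ℝ)) |
        MeasurableSpace.comap P1 inferInstance]) ω ≤ α - α₁) :
    μ {ω | ∃ j, (H1 j = false ∨ H2 j = false) ∧ j ∈ R1 ω ∧ j ∈ R2 ω}
      ≤ ENNReal.ofReal α :=
  fwer_replicability_of_conditional_control_general μ m P1 P2 hP1 hP2 H1 H2 R1 R2 hR1meas hR2meas α
    α₁ hcond1 hcond2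
end

section
/- Assume the null independence-across-studies condition and that null p-values are stochastically at least uniform. Let S₁, S₂ be arbitrary selection rules, 𝒮_i = S_i(P_i), S_i = |𝒮_i|. Then the Bonferroni replicability procedure, which rejects exactly the features j ∈ 𝒮₁ ∩ 𝒮₂ with P_{1j} ≤ α₁/S₂ and P_{2j} ≤ (α−α₁)/S₁, has FWER for replicability analysis at most α: Pr(some j with (H_{1j},H_{2j}) ≠ (1,1) is rejected) ≤ α. (Theorem 1 instantiated with Bonferroni; equivalently, declaring replicated all features with Bonferroni r-value max(S₂P_{1j}/c, S₁P_{2j}/(1−c)) ≤ α, where c = α₁/α, controls the FWER at level α.) -/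
open MeasureTheory ProbabilityTheory Finset
open scoped ENNReal

/-!
Split the replicability nulls into the features null in study 1 and those null in study 2.
For a null of study 1, independence lets one condition on the selected set `𝒮₂ = s` of the
other study, where the rejection threshold `α₁ / |s|` is fixed; summing over the features of
`s` and then over the disjoint events `{𝒮₂ = s}` gives at most `α₁`. Symmetrically study 2
contributes at most `α - α₁`.
-/

section

variable {Ω β ι : Type*} [MeasurableSpace Ω] [MeasurableSpace β] [Fintype ι]

lemma measurableSet_setOf_finset_eq {S : β → Finset ι}
    (hS : ∀ j, MeasurableSet {b | j ∈ S b}) (s : Finset ι) :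
    MeasurableSet {b | S b = s} := by
  simp only [Finset.ext_iff]
  exact measurableSet_setOfPred.2 <|
    Measurable.forall fun j => (measurableSet_setOfPred.1 (hS j)).iff measurable_const

variable [DecidableEq ι]

lemma sum_sum_filter_mem_div_card_le (N : Finset ι) (a : Finset ι → ℝ≥0∞) :
    ∑ j ∈ N, ∑ s : Finset ι with j ∈ s, a s / #s ≤ ∑ s, a s := by
  simp only [sum_filter]
  rw [sum_comm]
  refine sum_le_sum fun s _ => ?_
  rw [← sum_filter, sum_const, nsmul_eq_mul]
  calc (#(N.filter (fun j => j ∈ s)) : ℝ≥0∞) * (a s / #s) ≤ #s * (a s / #s) := by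
        gcongr
        exact fun j hj => (mem_filter.1 hj).2
    _ ≤ a s := ENNReal.mul_div_le

lemma measure_setOf_le_le_ofReal_of_forall_mem_Icc {μ : Measure Ω} [IsProbabilityMeasure μ]
    {X : Ω → ℝ} (h : ∀ x ∈ Set.Icc (0 : ℝ) 1, μ {ω | X ω ≤ x} ≤ ENNReal.ofReal x) {x : ℝ} (hx : 0 ≤ x) :
    μ {ω | X ω ≤ x} ≤ ENNReal.ofReal x := by
  rcases le_total x 1 with hx1 | hx1
  · exact h x ⟨hx, hx1⟩
  · exact prob_le_one.trans (ENNReal.one_le_ofReal.2 hx1)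

variable {μ : Measure Ω}

lemma measure_mem_selected_and_le_div_card_le_sum {Q : Ω → ℝ} {R : Ω → β} {S : β → Finset ι}
    (hS : ∀ j, MeasurableSet {b | j ∈ S b}) (hind : IndepFun Q R μ)
    (hunif : ∀ x, 0 ≤ x → μ {ω | Q ω ≤ x} ≤ ENNReal.ofReal x) {c : ℝ} (hc : 0 ≤ c) (j : ι) :
    μ {ω | j ∈ S (R ω) ∧ Q ω ≤ c / #(S (R ω))} ≤
      ∑ s : Finset ι with j ∈ s, μ (R ⁻¹' {b | S b = s}) * (ENNReal.ofReal c / #s) := by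
  have hsub : {ω | j ∈ S (R ω) ∧ Q ω ≤ c / #(S (R ω))} ⊆
      ⋃ s ∈ univ.filter (fun s : Finset ι => j ∈ s),
        Q ⁻¹' Set.Iic (c / #s) ∩ R ⁻¹' {b | S b = s} := by
    rintro ω ⟨hj, hle⟩
    simp only [Set.mem_iUnion]
    exact ⟨S (R ω), by simpa using hj, hle, rfl⟩
  refine (measure_mono hsub).trans <| (measure_biUnion_finset_le _ _).trans <|
    sum_le_sum fun s hs => ?_
  have hcard : (0 : ℝ) < #s := by exact_mod_cast card_pos.2 ⟨j, (mem_filter.1 hs).2⟩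
  rw [hind.measure_inter_preimage_eq_mul _ _ measurableSet_Iic
    (measurableSet_setOf_finset_eq hS s), mul_comm]
  gcongr
  calc μ (Q ⁻¹' Set.Iic (c / #s)) ≤ ENNReal.ofReal (c / #s) := hunif _ (by positivity)
    _ = ENNReal.ofReal c / #s := by rw [ENNReal.ofReal_div_of_pos hcard, ENNReal.ofReal_natCast]

theorem measure_exists_mem_selected_le_div_card_le [IsProbabilityMeasure μ]
    {Q : Ω → ι → ℝ} {R : Ω → β} (hR : Measurable R) {S : β → Finset ι}
    (hS : ∀ j, MeasurableSet {b | j ∈ S b}) {N : Finset ι}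
    (hind : ∀ j ∈ N, IndepFun (fun ω => Q ω j) R μ)
    (hunif : ∀ j ∈ N, ∀ x, 0 ≤ x → μ {ω | Q ω j ≤ x} ≤ ENNReal.ofReal x) {c : ℝ} (hc : 0 ≤ c) :
    μ {ω | ∃ j ∈ N, j ∈ S (R ω) ∧ Q ω j ≤ c / #(S (R ω))} ≤ ENNReal.ofReal c := by
  have hpartition : ∑ s, μ (R ⁻¹' {b | S b = s}) = 1 := by
    have := sum_measure_preimage_singleton (μ := μ) (f := S ∘ R) univ
      fun s _ => hR (measurableSet_setOf_finset_eq hS s)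
    rwa [coe_univ, Set.preimage_univ, measure_univ] at this
  have hsub : {ω | ∃ j ∈ N, j ∈ S (R ω) ∧ Q ω j ≤ c / #(S (R ω))} ⊆
      ⋃ j ∈ N, {ω | j ∈ S (R ω) ∧ Q ω j ≤ c / #(S (R ω))} := by
    rintro ω ⟨j, hj, hω⟩
    exact Set.mem_biUnion hj hω
  calc _ ≤ ∑ j ∈ N, μ {ω | j ∈ S (R ω) ∧ Q ω j ≤ c / #(S (R ω))} :=
        (measure_mono hsub).trans (measure_biUnion_finset_le _ _)
    _ ≤ ∑ j ∈ N, ∑ s : Finset ι with j ∈ s,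
          μ (R ⁻¹' {b | S b = s}) * ENNReal.ofReal c / #s := by
        refine sum_le_sum fun j hj => ?_
        simp only [mul_div_assoc]
        exact measure_mem_selected_and_le_div_card_le_sum hS (hind j hj) (hunif j hj) hc j
    _ ≤ ∑ s, μ (R ⁻¹' {b | S b = s}) * ENNReal.ofReal c :=
        sum_sum_filter_mem_div_card_le N _
    _ = ENNReal.ofReal c := by rw [← sum_mul, hpartition, one_mul]

end

theorem bonferroni_replicability_fwer_general
    {Ω : Type*} [MeasurableSpace Ω] (μ : Measure Ω) [IsProbabilityMeasure μ]
    (m : ℕ) (P1 P2 : Ω → Fin m → ℝ) (hP1 : Measurable P1) (hP2 : Measurable P2)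
    (H1 H2 : Fin m → Bool)
    -- null p-values are stochastically at least uniform
    (hunif1 : ∀ j, H1 j = false → ∀ x ∈ Set.Icc (0:ℝ) 1,
      μ {ω | P1 ω j ≤ x} ≤ ENNReal.ofReal x)
    (hunif2 : ∀ j, H2 j = false → ∀ x ∈ Set.Icc (0:ℝ) 1,
      μ {ω | P2 ω j ≤ x} ≤ ENNReal.ofReal x)
    -- null independence-across-studies condition
    (hind1 : ∀ j, (H1 j = false ∨ H2 j = false) → H1 j = false →
      IndepFun (fun ω => P1 ω j) P2 μ)
    (hind2 : ∀ j, (H1 j = false ∨ H2 j = false) → H2 j = false →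
      IndepFun (fun ω => P2 ω j) P1 μ)
    -- arbitrary (measurable) selection rules
    (S1 S2 : (Fin m → ℝ) → Finset (Fin m))
    (hS1 : ∀ j, MeasurableSet {p : Fin m → ℝ | j ∈ S1 p})
    (hS2 : ∀ j, MeasurableSet {p : Fin m → ℝ | j ∈ S2 p})
    (α α₁ : ℝ) (hα₁ : α₁ ∈ Set.Ioo (0:ℝ) α) :
    μ {ω | ∃ j, (H1 j = false ∨ H2 j = false) ∧
        j ∈ S1 (P1 ω) ∧ j ∈ S2 (P2 ω) ∧
        P1 ω j ≤ α₁ / (S2 (P2 ω)).card ∧ P2 ω j ≤ (α - α₁) / (S1 (P1 ω)).card}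
      ≤ ENNReal.ofReal α := by
  have hα₁0 : 0 ≤ α₁ := hα₁.1.le
  have hαα₁ : 0 ≤ α - α₁ := sub_nonneg.2 hα₁.2.le
  have hnull1 := measure_exists_mem_selected_le_div_card_le hP2 hS2
    (N := univ.filter (H1 · = false))
    (fun j hj => hind1 j (.inl (mem_filter.1 hj).2) (mem_filter.1 hj).2)
    (fun j hj _ => measure_setOf_le_le_ofReal_of_forall_mem_Icc (hunif1 j (mem_filter.1 hj).2))
    hα₁0
  have hnull2 := measure_exists_mem_selected_le_div_card_le hP1 hS1
    (N := univ.filter (H2 · = false))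
    (fun j hj => hind2 j (.inr (mem_filter.1 hj).2) (mem_filter.1 hj).2)
    (fun j hj _ => measure_setOf_le_le_ofReal_of_forall_mem_Icc (hunif2 j (mem_filter.1 hj).2))
    hαα₁
  calc _ ≤ μ ({ω | ∃ j ∈ univ.filter (H1 · = false), j ∈ S2 (P2 ω) ∧
              P1 ω j ≤ α₁ / #(S2 (P2 ω))} ∪
            {ω | ∃ j ∈ univ.filter (H2 · = false), j ∈ S1 (P1 ω) ∧
              P2 ω j ≤ (α - α₁) / #(S1 (P1 ω))}) := by
        refine measure_mono ?_
        rintro ω ⟨j, hnull | hnull, hj1, hj2, hp1, hp2⟩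
        · exact .inl ⟨j, mem_filter.2 ⟨mem_univ j, hnull⟩, hj2, hp1⟩
        · exact .inr ⟨j, mem_filter.2 ⟨mem_univ j, hnull⟩, hj1, hp2⟩
    _ ≤ ENNReal.ofReal α₁ + ENNReal.ofReal (α - α₁) :=
        (measure_union_le _ _).trans (add_le_add hnull1 hnull2)
    _ = ENNReal.ofReal α := by rw [← ENNReal.ofReal_add hα₁0 hαα₁, add_sub_cancel]

/-- Theorem 1 instantiated with Bonferroni. Under the null
independence-across-studies condition and null p-values stochastically at least uniform,
the Bonferroni replicability procedure, which rejects exactly the features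
`j ∈ 𝒮₁ ∩ 𝒮₂` (the sets selected from each study by arbitrary selection rules)
with `P1 j ≤ α₁ / |𝒮₂|` and `P2 j ≤ (α − α₁) / |𝒮₁|`, has FWER for replicability
analysis at most `α`.  Here `H1 j = false` means feature `j` is null in study 1
(similarly for study 2), and a replicability null is a feature with
`H1 j = false ∨ H2 j = false`. -/
theorem bonferroni_replicability_fwer
    {Ω : Type*} [MeasurableSpace Ω] (μ : Measure Ω) [IsProbabilityMeasure μ]
    (m : ℕ) (P1 P2 : Ω → Fin m → ℝ) (hP1 : Measurable P1) (hP2 : Measurable P2)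
    (H1 H2 : Fin m → Bool)
    (hrange1 : ∀ ω j, P1 ω j ∈ Set.Icc (0:ℝ) 1) (hrange2 : ∀ ω j, P2 ω j ∈ Set.Icc (0:ℝ) 1)
    -- null p-values are stochastically at least uniform
    (hunif1 : ∀ j, H1 j = false → ∀ x ∈ Set.Icc (0:ℝ) 1,
      μ {ω | P1 ω j ≤ x} ≤ ENNReal.ofReal x)
    (hunif2 : ∀ j, H2 j = false → ∀ x ∈ Set.Icc (0:ℝ) 1,
      μ {ω | P2 ω j ≤ x} ≤ ENNReal.ofReal x)
    -- null independence-across-studies condition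
    (hind1 : ∀ j, (H1 j = false ∨ H2 j = false) → H1 j = false →
      IndepFun (fun ω => P1 ω j) P2 μ)
    (hind2 : ∀ j, (H1 j = false ∨ H2 j = false) → H2 j = false →
      IndepFun (fun ω => P2 ω j) P1 μ)
    -- arbitrary (measurable) selection rules
    (S1 S2 : (Fin m → ℝ) → Finset (Fin m))
    (hS1 : ∀ j, MeasurableSet {p : Fin m → ℝ | j ∈ S1 p})
    (hS2 : ∀ j, MeasurableSet {p : Fin m → ℝ | j ∈ S2 p})
    (α α₁ : ℝ) (hα : α ∈ Set.Ioo (0:ℝ) 1) (hα₁ : α₁ ∈ Set.Ioo (0:ℝ) α) :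
    μ {ω | ∃ j, (H1 j = false ∨ H2 j = false) ∧
        j ∈ S1 (P1 ω) ∧ j ∈ S2 (P2 ω) ∧
        P1 ω j ≤ α₁ / (S2 (P2 ω)).card ∧ P2 ω j ≤ (α - α₁) / (S1 (P1 ω)).card}
      ≤ ENNReal.ofReal α :=
  bonferroni_replicability_fwer_general μ m P1 P2 hP1 hP2 H1 H2 hunif1 hunif2 hind1 hind2 S1 S2 hS1
    hS2 α α₁ hα₁
end

section
/- Assume each null p-value (each P_{ij} with H_{ij}=0) is independent of all the other 2m−1 p-values of the two studies, null p-values are stochastically at least uniform, and the selection rules S₁, S₂ are stable. Let 𝒮_i = S_i(P_i), S_i = |𝒮_i|, α₂ = α−α₁. Define R = max{r ∈ ℕ : #{j ∈ 𝒮₁∩𝒮₂ : P_{1j} ≤ rα₁/S₂ and P_{2j} ≤ rα₂/S₁} = r} (R = 0 if only r = 0 qualifies) and reject ℛ = {j ∈ 𝒮₁∩𝒮₂ : P_{1j} ≤ Rα₁/S₂ and P_{2j} ≤ Rα₂/S₁}. Then the FDR for replicability analysis satisfies E[|ℛ ∩ {j : (H_{1j},H_{2j}) ≠ (1,1)}|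 / max(|ℛ|,1)] ≤ α. (Theorem 2, item 1.) -/
open MeasureTheory ProbabilityTheory

/-- A selection rule is stable if, for any selected feature, changing its p-value so
that the feature is still selected, while all other p-values are held fixed, does not
change the set of selected features. -/
def StableSelection {m : ℕ} (S : (Fin m → ℝ) → Finset (Fin m)) : Prop :=
  ∀ p p' : Fin m → ℝ, ∀ j, j ∈ S p → j ∈ S p' → (∀ k, k ≠ j → p' k = p k) → S p' = S p

/-- The step-up count `R` of the two-study FDR-replicability procedure on the selected
set `sel`, with per-unit thresholds `a1, a2`:  the largest `r` such that exactly `r`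
features `j ∈ sel` satisfy `q1 j ≤ r·a1` and `q2 j ≤ r·a2`. -/
noncomputable def stepUpCount {m : ℕ} (sel : Set (Fin m)) (q1 q2 : Fin m → ℝ)
    (a1 a2 : ℝ) : ℕ :=
  sSup {r : ℕ | Nat.card {j : Fin m // j ∈ sel ∧ q1 j ≤ r * a1 ∧ q2 j ≤ r * a2} = r}

/-- The rejection region of the step-up procedure. -/
noncomputable def stepUpReject {m : ℕ} (sel : Set (Fin m)) (q1 q2 : Fin m → ℝ)
    (a1 a2 : ℝ) : Set (Fin m) :=
  {j | j ∈ sel ∧ q1 j ≤ (stepUpCount sel q1 q2 a1 a2) * a1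
      ∧ q2 j ≤ (stepUpCount sel q1 q2 a1 a2) * a2}

/-- The false discovery proportion for replicability analysis of a rejection set:
the number of rejected replicability nulls (features with `H1 j = false ∨ H2 j = false`)
divided by `max(#rejections, 1)`. -/
noncomputable def fdpRepl {m : ℕ} (H1 H2 : Fin m → Bool) (Rset : Set (Fin m)) : ℝ :=
  (Nat.card {j : Fin m // j ∈ Rset ∧ (H1 j = false ∨ H2 j = false)} : ℝ) /
    max (Nat.card {j : Fin m // j ∈ Rset} : ℝ) 1

open scoped ENNReal

/-!
The FDP is at most the sum, over the null features `j` of either study, of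
`1{j ∈ ℛ} / |ℛ|`. Fix a null first-study p-value `P₁ⱼ` and condition on all the other
p-values. As long as `j` is selected, stability freezes `𝒮₁`; once `j` is rejected, the
step-up count `R` equals the count `R₀` obtained by setting `P₁ⱼ := 0` (leave-one-out). Hence
`1{j ∈ ℛ} / R ≤ 1{P₁ⱼ ≤ R₀ α₁ / S₂} / R₀`, whose conditional expectation is at most
`α₁ / S₂` by super-uniformity, and which vanishes unless `j ∈ 𝒮₂`. Summing over `j ∈ 𝒮₂`
bounds the first study's contribution by `α₁`; symmetrically the second contributes at most
`α − α₁`.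
-/

section StepUp

variable {m : ℕ} (sel : Set (Fin m)) (q1 q2 : Fin m → ℝ) (a1 a2 : ℝ)

noncomputable def stepUpPassCount (r : ℕ) : ℕ :=
  Nat.card {j : Fin m // j ∈ sel ∧ q1 j ≤ r * a1 ∧ q2 j ≤ r * a2}

theorem stepUpPassCount_le (r : ℕ) : stepUpPassCount sel q1 q2 a1 a2 r ≤ m :=
  (Finite.card_subtype_le _).trans_eq (Nat.card_eq_fintype_card.trans (Fintype.card_fin m))

variable {a1 a2}

theorem stepUpPassCount_mono (ha1 : 0 ≤ a1) (ha2 : 0 ≤ a2) :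
    Monotone (stepUpPassCount sel q1 q2 a1 a2) := fun r r' hr =>
  Nat.card_mono (Set.toFinite _) fun j ⟨hj, h1, h2⟩ =>
    ⟨hj, h1.trans (by gcongr), h2.trans (by gcongr)⟩

theorem exists_stepUpPassCount_eq (ha1 : 0 ≤ a1) (ha2 : 0 ≤ a2) :
    ∃ r, stepUpPassCount sel q1 q2 a1 a2 r = r := by
  by_contra! hne
  -- without a fixed point, `r ≤ count r` propagates to `r + 1`, which fails at `m + 1`
  have hlt : ∀ r, r ≤ stepUpPassCount sel q1 q2 a1 a2 r := by
    intro r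
    induction r with
    | zero => exact Nat.zero_le _
    | succ r ih =>
      exact (lt_of_le_of_ne ih (hne r).symm).trans_le
        (stepUpPassCount_mono sel q1 q2 ha1 ha2 r.le_succ)
  exact absurd (hlt (m + 1)) (by have := stepUpPassCount_le sel q1 q2 a1 a2 (m + 1); omega)

variable (a1 a2)

theorem stepUpCount_eq_findGreatest :
    stepUpCount sel q1 q2 a1 a2 =
      Nat.findGreatest (fun r => stepUpPassCount sel q1 q2 a1 a2 r = r) m := by
  refine le_antisymm (csSup_le' fun r hr => Nat.le_findGreatest ?_ hr) ?_
  · exact hr ▸ stepUpPassCount_le sel q1 q2 a1 a2 r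
  · set n := Nat.findGreatest (fun r => stepUpPassCount sel q1 q2 a1 a2 r = r) m
    rcases Nat.eq_zero_or_pos n with hn | hn
    · exact hn ▸ Nat.zero_le _
    · exact le_csSup ⟨m, fun r hr => hr ▸ stepUpPassCount_le sel q1 q2 a1 a2 r⟩
        (Nat.findGreatest_of_ne_zero rfl hn.ne')

theorem le_stepUpCount {r : ℕ} (hr : stepUpPassCount sel q1 q2 a1 a2 r = r) :
    r ≤ stepUpCount sel q1 q2 a1 a2 :=
  stepUpCount_eq_findGreatest sel q1 q2 a1 a2 ▸
    Nat.le_findGreatest (hr ▸ stepUpPassCount_le sel q1 q2 a1 a2 r) hr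

variable {a1 a2}

theorem stepUpPassCount_stepUpCount (ha1 : 0 ≤ a1) (ha2 : 0 ≤ a2) :
    stepUpPassCount sel q1 q2 a1 a2 (stepUpCount sel q1 q2 a1 a2) =
      stepUpCount sel q1 q2 a1 a2 := by
  obtain ⟨r, hr⟩ := exists_stepUpPassCount_eq sel q1 q2 ha1 ha2
  rw [stepUpCount_eq_findGreatest]
  have hrm : r ≤ m := hr ▸ stepUpPassCount_le sel q1 q2 a1 a2 r
  exact Nat.findGreatest_spec (P := fun r => stepUpPassCount sel q1 q2 a1 a2 r = r) hrm hr

theorem natCard_stepUpReject (ha1 : 0 ≤ a1) (ha2 : 0 ≤ a2) :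
    Nat.card (stepUpReject sel q1 q2 a1 a2) = stepUpCount sel q1 q2 a1 a2 :=
  stepUpPassCount_stepUpCount sel q1 q2 ha1 ha2

theorem stepUpPassCount_update_eq (ha1 : 0 ≤ a1) (j : Fin m) {t : ℝ} {r : ℕ}
    (ht : t ≤ r * a1) :
    stepUpPassCount sel (Function.update q1 j t) q2 a1 a2 r =
      stepUpPassCount sel (Function.update q1 j 0) q2 a1 a2 r := by
  refine Nat.card_congr (Equiv.subtypeEquivRight fun k => ?_)
  rcases eq_or_ne k j with rfl | hk
  · simp only [Function.update_self, ht, true_and, iff_true_intro (by positivity : 0 ≤ r * a1)]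
  · simp only [Function.update_of_ne hk]

theorem stepUpCount_update_of_mem_stepUpReject (ha1 : 0 ≤ a1) (ha2 : 0 ≤ a2) {j : Fin m}
    {t : ℝ} (hj : j ∈ stepUpReject sel (Function.update q1 j t) q2 a1 a2) :
    stepUpCount sel (Function.update q1 j t) q2 a1 a2 =
      stepUpCount sel (Function.update q1 j 0) q2 a1 a2 := by
  set Rt := stepUpCount sel (Function.update q1 j t) q2 a1 a2
  set R0 := stepUpCount sel (Function.update q1 j 0) q2 a1 a2
  have htRt : t ≤ Rt * a1 := by simpa using hj.2.1
  have hRt : Rt ≤ R0 := le_stepUpCount _ _ _ _ _ <| by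
    rw [← stepUpPassCount_update_eq sel q1 q2 ha1 j htRt]
    exact stepUpPassCount_stepUpCount _ _ _ ha1 ha2
  have htR0 : t ≤ R0 * a1 := htRt.trans (by gcongr)
  have hR0 : R0 ≤ Rt := le_stepUpCount _ _ _ _ _ <| by
    rw [stepUpPassCount_update_eq sel q1 q2 ha1 j htR0]
    exact stepUpPassCount_stepUpCount _ _ _ ha1 ha2
  exact le_antisymm hRt hR0

variable (a1 a2)

theorem stepUpReject_comm :
    stepUpReject sel q1 q2 a1 a2 = stepUpReject sel q2 q1 a2 a1 := by
  have hcount : stepUpCount sel q1 q2 a1 a2 = stepUpCount sel q2 q1 a2 a1 := by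
    simp only [stepUpCount, and_comm]
  ext j
  simp only [stepUpReject, Set.mem_ofPred_eq, hcount, and_comm]

end StepUp

section Measurability

variable {Z : Type*} [MeasurableSpace Z]

theorem measurable_natCard_subtype {ι : Type*} [Fintype ι] {p : Z → ι → Prop}
    (hp : ∀ i, MeasurableSet {z | p z i}) : Measurable fun z => Nat.card {i // p z i} := by
  classical
  have hcard : (fun z => Nat.card {i // p z i}) = fun z => ∑ i, if p z i then 1 else 0 := by
    funext z
    rw [Finset.sum_boole, Nat.cast_id, Nat.card_eq_fintype_card, Fintype.card_subtype]
  rw [hcard]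
  exact Finset.measurable_sum _ fun i _ => Measurable.ite (hp i) measurable_const measurable_const

theorem measurable_finsetCard {ι : Type*} [Fintype ι] {S : Z → Finset ι}
    (hS : ∀ i, MeasurableSet {z | i ∈ S z}) : Measurable fun z => (S z).card := by
  simpa only [Nat.card_eq_finsetCard] using measurable_natCard_subtype hS

variable {m : ℕ} {sel : Z → Set (Fin m)} {q1 q2 : Z → Fin m → ℝ} {a1 a2 : Z → ℝ}

theorem measurable_stepUpCount (hsel : ∀ j, MeasurableSet {z | j ∈ sel z})
    (hq1 : Measurable q1) (hq2 : Measurable q2) (ha1 : Measurable a1) (ha2 : Measurable a2) :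
    Measurable fun z => stepUpCount (sel z) (q1 z) (q2 z) (a1 z) (a2 z) := by
  simp only [stepUpCount_eq_findGreatest]
  refine measurable_findGreatest fun r _ => measurableSet_eq_fun ?_ measurable_const
  refine measurable_natCard_subtype fun j => ?_
  change MeasurableSet ({z | j ∈ sel z} ∩ ({z | q1 z j ≤ r * a1 z} ∩ {z | q2 z j ≤ r * a2 z}))
  exact (hsel j).inter ((measurableSet_le (by fun_prop) (by fun_prop)).inter
    (measurableSet_le (by fun_prop) (by fun_prop)))

theorem measurableSet_mem_stepUpReject (hsel : ∀ j, MeasurableSet {z | j ∈ sel z})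
    (hq1 : Measurable q1) (hq2 : Measurable q2) (ha1 : Measurable a1) (ha2 : Measurable a2)
    (j : Fin m) :
    MeasurableSet {z | j ∈ stepUpReject (sel z) (q1 z) (q2 z) (a1 z) (a2 z)} := by
  have hR : Measurable fun z => (stepUpCount (sel z) (q1 z) (q2 z) (a1 z) (a2 z) : ℝ) :=
    (Measurable.of_discrete (f := ((↑) : ℕ → ℝ))).comp
      (measurable_stepUpCount hsel hq1 hq2 ha1 ha2)
  change MeasurableSet ({z | j ∈ sel z} ∩
    ({z | q1 z j ≤ stepUpCount (sel z) (q1 z) (q2 z) (a1 z) (a2 z) * a1 z} ∩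
      {z | q2 z j ≤ stepUpCount (sel z) (q1 z) (q2 z) (a1 z) (a2 z) * a2 z}))
  exact (hsel j).inter ((measurableSet_le (by fun_prop) (hR.mul ha1)).inter
    (measurableSet_le (by fun_prop) (hR.mul ha2)))

end Measurability

section Probability

variable {Ω : Type*} [MeasurableSpace Ω] {μ : Measure Ω}

theorem lintegral_comp_le_of_indepFun {α β : Type*} [MeasurableSpace α] [MeasurableSpace β]
    [IsFiniteMeasure μ] {X : Ω → α} {W : Ω → β}
    (hX : Measurable X) (hW : Measurable W) (hXW : IndepFun X W μ) {g : α × β → ℝ≥0∞}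
    (hg : Measurable g) {b : β → ℝ≥0∞} (hgb : ∀ w, ∫⁻ x, g (x, w) ∂(μ.map X) ≤ b w) :
    ∫⁻ ω, g (X ω, W ω) ∂μ ≤ ∫⁻ ω, b (W ω) ∂μ :=
  calc ∫⁻ ω, g (X ω, W ω) ∂μ = ∫⁻ z, g z ∂(μ.map fun ω => (X ω, W ω)) :=
        (lintegral_map hg (hX.prodMk hW)).symm
    _ = ∫⁻ z, g z ∂((μ.map X).prod (μ.map W)) := by
        rw [(indepFun_iff_map_prod_eq_prod_map_map hX.aemeasurable hW.aemeasurable).1 hXW]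
    _ = ∫⁻ w, ∫⁻ x, g (x, w) ∂(μ.map X) ∂(μ.map W) := lintegral_prod_symm' g hg
    _ ≤ ∫⁻ w, b w ∂(μ.map W) := lintegral_mono hgb
    _ ≤ ∫⁻ ω, b (W ω) ∂μ := lintegral_map_le b W

theorem integral_le_of_lintegral_ofReal_le {f : Ω → ℝ} (hf : ∀ ω, 0 ≤ f ω) {c : ℝ}
    (hc : 0 ≤ c) (h : ∫⁻ ω, ENNReal.ofReal (f ω) ∂μ ≤ ENNReal.ofReal c) : ∫ ω, f ω ∂μ ≤ c := by
  rw [← ENNReal.ofReal_le_ofReal_iff hc]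
  calc ENNReal.ofReal (∫ ω, f ω ∂μ) ≤ ‖∫ ω, f ω ∂μ‖ₑ := by
        rw [Real.enorm_eq_ofReal_abs]
        exact ENNReal.ofReal_le_ofReal (le_abs_self _)
    _ ≤ ∫⁻ ω, ‖f ω‖ₑ ∂μ := enorm_integral_le_lintegral_enorm f
    _ = ∫⁻ ω, ENNReal.ofReal (f ω) ∂μ := by simp only [Real.enorm_of_nonneg (hf _)]
    _ ≤ ENNReal.ofReal c := h

end Probability

section Share

variable {m : ℕ}

noncomputable def rejectionShare (R : Set (Fin m)) (j : Fin m) : ℝ≥0∞ :=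
  R.indicator (fun _ => (Nat.card R : ℝ≥0∞)⁻¹) j

theorem measurable_rejectionShare {Z : Type*} [MeasurableSpace Z] {R : Z → Set (Fin m)}
    (hR : ∀ i, MeasurableSet {z | i ∈ R z}) (j : Fin m) :
    Measurable fun z => rejectionShare (R z) j := by
  classical
  simp only [rejectionShare, Set.indicator_apply]
  exact Measurable.ite (hR j) ((Measurable.of_discrete (f := fun n : ℕ => (n : ℝ≥0∞)⁻¹)).comp
    (measurable_natCard_subtype hR)) measurable_const

theorem fdpRepl_nonneg (H1 H2 : Fin m → Bool) (R : Set (Fin m)) : 0 ≤ fdpRepl H1 H2 R :=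
  div_nonneg (Nat.cast_nonneg _) (le_max_of_le_right zero_le_one)

theorem ofReal_fdpRepl_le (H1 H2 : Fin m → Bool) (R : Set (Fin m)) :
    ENNReal.ofReal (fdpRepl H1 H2 R) ≤
      ∑ j with H1 j = false, rejectionShare R j + ∑ j with H2 j = false, rejectionShare R j := by
  classical
  have hsum : ∀ s : Finset (Fin m), ∑ j ∈ s, rejectionShare R j =
      ((s.filter (· ∈ R)).card : ℝ≥0∞) * (Nat.card R : ℝ≥0∞)⁻¹ := fun s => by
    simp only [rejectionShare, Set.indicator_apply, ← Finset.sum_filter, Finset.sum_const,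
      nsmul_eq_mul]
  have hnull : Nat.card {j // j ∈ R ∧ (H1 j = false ∨ H2 j = false)} =
      ((Finset.univ.filter fun j => H1 j = false ∨ H2 j = false).filter (· ∈ R)).card := by
    rw [Nat.card_eq_fintype_card, Fintype.card_subtype, Finset.filter_filter]
    simp only [and_comm]
  have hle : Nat.card {j // j ∈ R ∧ (H1 j = false ∨ H2 j = false)} ≤ Nat.card R :=
    Nat.card_mono (Set.toFinite R) fun j hj => hj.1
  have hfdp : ENNReal.ofReal (fdpRepl H1 H2 R) ≤
      ∑ j with H1 j = false ∨ H2 j = false, rejectionShare R j := by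
    rw [hsum, fdpRepl, ← hnull]
    rcases Nat.eq_zero_or_pos (Nat.card R) with hN | hN
    · rw [show Nat.card {j // j ∈ R ∧ (H1 j = false ∨ H2 j = false)} = 0 by omega]
      simp
    · rw [show Nat.card {j // j ∈ R} = Nat.card R from rfl,
        max_eq_left (by exact_mod_cast hN), ENNReal.ofReal_div_of_pos (by positivity),
        ENNReal.ofReal_natCast, ENNReal.ofReal_natCast, div_eq_mul_inv]
  refine hfdp.trans ?_
  rw [Finset.filter_or]
  exact le_self_add.trans_eq (Finset.sum_union_inter ..)

theorem sum_ite_mem_ofReal_div_card_le {ι : Type*} [Fintype ι] [DecidableEq ι] (B : Finset ι)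
    {a : ℝ} (ha : 0 ≤ a) :
    ∑ j, (if j ∈ B then ENNReal.ofReal (a / B.card) else 0) ≤ ENNReal.ofReal a := by
  rw [Finset.sum_ite_mem, Finset.univ_inter, Finset.sum_const, nsmul_eq_mul,
    ← ENNReal.ofReal_natCast, ← ENNReal.ofReal_mul (Nat.cast_nonneg _)]
  refine ENNReal.ofReal_le_ofReal ?_
  rcases eq_or_ne (B.card : ℝ) 0 with hB | hB
  · simp [hB, ha]
  · rw [mul_div_cancel₀ _ hB]

end Share

section Procedure

variable {m : ℕ} (S1 S2 : (Fin m → ℝ) → Finset (Fin m)) (a1 a2 : ℝ)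

noncomputable def replReject (p1 p2 : Fin m → ℝ) : Set (Fin m) :=
  stepUpReject ↑(S1 p1 ∩ S2 p2) p1 p2 (a1 / (S2 p2).card) (a2 / (S1 p1).card)

theorem replReject_comm (p1 p2 : Fin m → ℝ) :
    replReject S1 S2 a1 a2 p1 p2 = replReject S2 S1 a2 a1 p2 p1 := by
  rw [replReject, replReject, stepUpReject_comm, Finset.inter_comm]

variable {S1 S2}

theorem measurableSet_mem_replReject (hS1 : ∀ j, MeasurableSet {p | j ∈ S1 p})
    (hS2 : ∀ j, MeasurableSet {p | j ∈ S2 p}) (j : Fin m) :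
    MeasurableSet {p : (Fin m → ℝ) × (Fin m → ℝ) | j ∈ replReject S1 S2 a1 a2 p.1 p.2} := by
  have hcard1 : Measurable fun p : (Fin m → ℝ) × (Fin m → ℝ) => ((S1 p.1).card : ℝ) :=
    Measurable.of_discrete.comp (measurable_finsetCard fun k => measurable_fst (hS1 k))
  have hcard2 : Measurable fun p : (Fin m → ℝ) × (Fin m → ℝ) => ((S2 p.2).card : ℝ) :=
    Measurable.of_discrete.comp (measurable_finsetCard fun k => measurable_snd (hS2 k))
  refine measurableSet_mem_stepUpReject (sel := fun p => ↑(S1 p.1 ∩ S2 p.2))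
    (a1 := fun p => a1 / (S2 p.2).card) (a2 := fun p => a2 / (S1 p.1).card) (fun k => ?_)
    measurable_fst measurable_snd (measurable_const.div hcard2)
    (measurable_const.div hcard1) j
  simp only [Finset.coe_inter, Set.mem_inter_iff, Finset.mem_coe]
  exact (measurable_fst (hS1 k)).inter (measurable_snd (hS2 k))

variable {a1 a2}

theorem card_replReject_update_of_mem (hS1 : StableSelection S1) (ha1 : 0 ≤ a1)
    (ha2 : 0 ≤ a2) {p1 p2 : Fin m → ℝ} {j : Fin m} {x₀ x : ℝ}
    (hx₀ : j ∈ replReject S1 S2 a1 a2 (Function.update p1 j x₀) p2)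
    (hx : j ∈ replReject S1 S2 a1 a2 (Function.update p1 j x) p2) :
    Nat.card (replReject S1 S2 a1 a2 (Function.update p1 j x) p2) =
        Nat.card (replReject S1 S2 a1 a2 (Function.update p1 j x₀) p2) ∧
      x ≤ Nat.card (replReject S1 S2 a1 a2 (Function.update p1 j x₀) p2) * (a1 / (S2 p2).card) := by
  have hA : S1 (Function.update p1 j x) = S1 (Function.update p1 j x₀) :=
    hS1 _ _ j (Finset.mem_inter.1 hx₀.1).1 (Finset.mem_inter.1 hx.1).1 fun k hk => by
      simp [Function.update_of_ne hk]
  have hc1 : 0 ≤ a1 / (S2 p2).card := by positivity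
  have hc2 : 0 ≤ a2 / (S1 (Function.update p1 j x₀)).card := by positivity
  rw [replReject, hA] at hx ⊢
  rw [replReject] at hx₀ ⊢
  have hR := stepUpCount_update_of_mem_stepUpReject _ p1 p2 hc1 hc2 hx
  have hR₀ := stepUpCount_update_of_mem_stepUpReject _ p1 p2 hc1 hc2 hx₀
  rw [natCard_stepUpReject _ _ _ hc1 hc2, natCard_stepUpReject _ _ _ hc1 hc2, hR, hR₀]
  refine ⟨rfl, ?_⟩
  have hx1 := hx.2.1
  rwa [Function.update_self, hR] at hx1

/-- Conditionally on the other p-values, a null first-study p-value contributes at most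
`a1 / |S2 p2|` to the expected FDP. -/
theorem lintegral_rejectionShare_update_le (hS1 : StableSelection S1) (ha1 : 0 ≤ a1)
    (ha2 : 0 ≤ a2) {ν : Measure ℝ}
    (hν : ∀ c, 0 ≤ c → ν (Set.Iic c) ≤ ENNReal.ofReal c) (p1 p2 : Fin m → ℝ) (j : Fin m) :
    ∫⁻ x, rejectionShare (replReject S1 S2 a1 a2 (Function.update p1 j x) p2) j ∂ν ≤
      if j ∈ S2 p2 then ENNReal.ofReal (a1 / (S2 p2).card) else 0 := by
  by_cases hex : ∃ x₀, j ∈ replReject S1 S2 a1 a2 (Function.update p1 j x₀) p2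
  swap
  · simp only [not_exists] at hex
    simp [rejectionShare, hex]
  obtain ⟨x₀, hx₀⟩ := hex
  set R := Nat.card (replReject S1 S2 a1 a2 (Function.update p1 j x₀) p2)
  set c := a1 / (S2 p2).card
  have hR : R ≠ 0 := (Nat.card_pos_iff.2 ⟨⟨j, hx₀⟩, Set.toFinite _⟩).ne'
  have hpt : ∀ x, rejectionShare (replReject S1 S2 a1 a2 (Function.update p1 j x) p2) j ≤
      (Set.Iic (R * c)).indicator (fun _ => (R : ℝ≥0∞)⁻¹) x := by
    intro x
    by_cases hx : j ∈ replReject S1 S2 a1 a2 (Function.update p1 j x) p2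
    · obtain ⟨hcard, hle⟩ := card_replReject_update_of_mem hS1 ha1 ha2 hx₀ hx
      rw [rejectionShare, Set.indicator_of_mem hx, hcard, Set.indicator_of_mem (s := Set.Iic _) hle]
    · rw [rejectionShare, Set.indicator_of_notMem hx]
      exact zero_le
  calc ∫⁻ x, rejectionShare (replReject S1 S2 a1 a2 (Function.update p1 j x) p2) j ∂ν
      ≤ ∫⁻ x, (Set.Iic (R * c)).indicator (fun _ => (R : ℝ≥0∞)⁻¹) x ∂ν := lintegral_mono hpt
    _ = (R : ℝ≥0∞)⁻¹ * ν (Set.Iic (R * c)) := lintegral_indicator_const measurableSet_Iic _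
    _ ≤ (R : ℝ≥0∞)⁻¹ * ENNReal.ofReal (R * c) := by
        gcongr
        exact hν _ (by positivity)
    _ = ENNReal.ofReal c := by
        rw [ENNReal.ofReal_mul (by positivity), ENNReal.ofReal_natCast, ← mul_assoc,
          ENNReal.inv_mul_cancel (by exact_mod_cast hR) (ENNReal.natCast_ne_top _), one_mul]
    _ = _ := (if_pos (Finset.mem_inter.1 hx₀.1).2).symm

theorem lintegral_rejectionShare_le_of_null {Ω : Type*} [MeasurableSpace Ω] {μ : Measure Ω}
    [IsProbabilityMeasure μ] {P1 P2 : Ω → Fin m → ℝ} (hP1 : Measurable P1)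
    (hP2 : Measurable P2) (hS1 : StableSelection S1)
    (hS1m : ∀ j, MeasurableSet {p | j ∈ S1 p}) (hS2m : ∀ j, MeasurableSet {p | j ∈ S2 p})
    (ha1 : 0 ≤ a1) (ha2 : 0 ≤ a2) {j : Fin m}
    (hunif : ∀ x ∈ Set.Icc (0 : ℝ) 1, μ {ω | P1 ω j ≤ x} ≤ ENNReal.ofReal x)
    (hind : IndepFun (fun ω => P1 ω j)
      (fun ω => ((fun k : {k : Fin m // k ≠ j} => P1 ω k), P2 ω)) μ) :
    ∫⁻ ω, rejectionShare (replReject S1 S2 a1 a2 (P1 ω) (P2 ω)) j ∂μ ≤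
      ∫⁻ ω, (if j ∈ S2 (P2 ω) then ENNReal.ofReal (a1 / (S2 (P2 ω)).card) else 0) ∂μ := by
  have hX : Measurable fun ω => P1 ω j := (measurable_pi_apply j).comp hP1
  set W : Ω → (Fin m → ℝ) × (Fin m → ℝ) := fun ω => (Function.update (P1 ω) j 0, P2 ω)
  have hXW : IndepFun (fun ω => P1 ω j) W μ := by
    let φ : ({k : Fin m // k ≠ j} → ℝ) × (Fin m → ℝ) → (Fin m → ℝ) × (Fin m → ℝ) :=
      fun v => ((Equiv.piEquivPiSubtypeProd (· = j) fun _ => ℝ).symm (fun _ => 0, v.1), v.2)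
    have hφ : Measurable φ :=
      ((measurable_piEquivPiSubtypeProd_symm (fun _ => ℝ) (· = j)).comp
        (measurable_const.prodMk measurable_fst)).prodMk measurable_snd
    have hφW : φ ∘ (fun ω => ((fun k : {k : Fin m // k ≠ j} => P1 ω k), P2 ω)) = W := by
      funext ω
      refine Prod.ext (funext fun k => ?_) rfl
      rcases eq_or_ne k j with rfl | hk
      · simp [φ, W]
      · simp [φ, W, hk]
    exact hφW ▸ hind.comp measurable_id hφ
  have hν : ∀ c, 0 ≤ c → μ.map (fun ω => P1 ω j) (Set.Iic c) ≤ ENNReal.ofReal c := by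
    intro c hc
    rw [Measure.map_apply hX measurableSet_Iic]
    rcases le_or_gt c 1 with hc1 | hc1
    · exact hunif c ⟨hc, hc1⟩
    · exact prob_le_one.trans (ENNReal.one_le_ofReal.2 hc1.le)
  have hupd : Measurable fun z : ℝ × (Fin m → ℝ) × (Fin m → ℝ) =>
      (Function.update z.2.1 j z.1, z.2.2) :=
    (measurable_update'.comp (measurable_snd.fst.prodMk measurable_fst)).prodMk
      measurable_snd.snd
  have hg := measurable_rejectionShare
    (fun i => (measurableSet_mem_replReject a1 a2 hS1m hS2m i).preimage hupd) j
  calc ∫⁻ ω, rejectionShare (replReject S1 S2 a1 a2 (P1 ω) (P2 ω)) j ∂μ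
      = ∫⁻ ω, rejectionShare (replReject S1 S2 a1 a2
          (Function.update (W ω).1 j (P1 ω j)) (W ω).2) j ∂μ := by
        simp only [W, Function.update_idem, Function.update_eq_self]
    _ ≤ _ := lintegral_comp_le_of_indepFun hX (by fun_prop) hXW hg
        fun w => lintegral_rejectionShare_update_le hS1 ha1 ha2 hν w.1 w.2 j

theorem sum_lintegral_rejectionShare_le {Ω : Type*} [MeasurableSpace Ω] {μ : Measure Ω}
    [IsProbabilityMeasure μ] {P1 P2 : Ω → Fin m → ℝ} (hP1 : Measurable P1)
    (hP2 : Measurable P2) (hS1 : StableSelection S1)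
    (hS1m : ∀ j, MeasurableSet {p | j ∈ S1 p}) (hS2m : ∀ j, MeasurableSet {p | j ∈ S2 p})
    (ha1 : 0 ≤ a1) (ha2 : 0 ≤ a2) {N : Finset (Fin m)}
    (hunif : ∀ j ∈ N, ∀ x ∈ Set.Icc (0 : ℝ) 1, μ {ω | P1 ω j ≤ x} ≤ ENNReal.ofReal x)
    (hind : ∀ j ∈ N, IndepFun (fun ω => P1 ω j)
      (fun ω => ((fun k : {k : Fin m // k ≠ j} => P1 ω k), P2 ω)) μ) :
    ∑ j ∈ N, ∫⁻ ω, rejectionShare (replReject S1 S2 a1 a2 (P1 ω) (P2 ω)) j ∂μ ≤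
      ENNReal.ofReal a1 := by
  have hbound : ∀ j, Measurable fun ω =>
      if j ∈ S2 (P2 ω) then ENNReal.ofReal (a1 / (S2 (P2 ω)).card) else 0 := fun j =>
    Measurable.ite (hP2 (hS2m j)) ((Measurable.of_discrete (f := fun n : ℕ =>
      ENNReal.ofReal (a1 / n))).comp (measurable_finsetCard fun k => hP2 (hS2m k)))
      measurable_const
  calc ∑ j ∈ N, ∫⁻ ω, rejectionShare (replReject S1 S2 a1 a2 (P1 ω) (P2 ω)) j ∂μ
      ≤ ∑ j, ∫⁻ ω, (if j ∈ S2 (P2 ω) then ENNReal.ofReal (a1 / (S2 (P2 ω)).card) else 0) ∂μ :=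
        (Finset.sum_le_sum fun j hj => lintegral_rejectionShare_le_of_null hP1 hP2 hS1 hS1m hS2m
          ha1 ha2 (hunif j hj) (hind j hj)).trans
          (Finset.sum_le_sum_of_subset (Finset.subset_univ N))
    _ = ∫⁻ ω, ∑ j, (if j ∈ S2 (P2 ω) then ENNReal.ofReal (a1 / (S2 (P2 ω)).card) else 0) ∂μ :=
        (lintegral_finsetSum _ fun j _ => hbound j).symm
    _ ≤ ∫⁻ _, ENNReal.ofReal a1 ∂μ :=
        lintegral_mono fun ω => sum_ite_mem_ofReal_div_card_le _ ha1
    _ = ENNReal.ofReal a1 := by rw [lintegral_const, measure_univ, mul_one]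

theorem lintegral_ofReal_fdpRepl_le {Ω : Type*} [MeasurableSpace Ω] {μ : Measure Ω}
    {P1 P2 : Ω → Fin m → ℝ} (hP1 : Measurable P1) (hP2 : Measurable P2)
    (hS1m : ∀ j, MeasurableSet {p | j ∈ S1 p}) (hS2m : ∀ j, MeasurableSet {p | j ∈ S2 p})
    (H1 H2 : Fin m → Bool) :
    ∫⁻ ω, ENNReal.ofReal (fdpRepl H1 H2 (replReject S1 S2 a1 a2 (P1 ω) (P2 ω))) ∂μ ≤
      ∑ j with H1 j = false, ∫⁻ ω, rejectionShare (replReject S1 S2 a1 a2 (P1 ω) (P2 ω)) j ∂μ +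
        ∑ j with H2 j = false,
          ∫⁻ ω, rejectionShare (replReject S2 S1 a2 a1 (P2 ω) (P1 ω)) j ∂μ := by
  have hshare : ∀ j, Measurable fun ω =>
      rejectionShare (replReject S1 S2 a1 a2 (P1 ω) (P2 ω)) j := fun j =>
    measurable_rejectionShare
      (fun i => (measurableSet_mem_replReject _ _ hS1m hS2m i).preimage (hP1.prodMk hP2)) j
  simp only [← replReject_comm]
  rw [← lintegral_finsetSum _ fun j _ => hshare j, ← lintegral_finsetSum _ fun j _ => hshare j,
    ← lintegral_add_left (Finset.measurable_sum _ fun j _ => hshare j)]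
  exact lintegral_mono fun ω => ofReal_fdpRepl_le H1 H2 _

end Procedure

theorem fdr_replicability_indep_general
    {Ω : Type*} [MeasurableSpace Ω] (μ : Measure Ω) [IsProbabilityMeasure μ]
    (m : ℕ) (P1 P2 : Ω → Fin m → ℝ) (hP1 : Measurable P1) (hP2 : Measurable P2)
    (H1 H2 : Fin m → Bool)
    -- null p-values are stochastically at least uniform
    (hunif1 : ∀ j, H1 j = false → ∀ x ∈ Set.Icc (0:ℝ) 1,
      μ {ω | P1 ω j ≤ x} ≤ ENNReal.ofReal x)
    (hunif2 : ∀ j, H2 j = false → ∀ x ∈ Set.Icc (0:ℝ) 1,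
      μ {ω | P2 ω j ≤ x} ≤ ENNReal.ofReal x)
    -- each null p-value is independent of all the other 2m−1 p-values
    (hind1 : ∀ j, H1 j = false →
      IndepFun (fun ω => P1 ω j)
        (fun ω => ((fun k : {k : Fin m // k ≠ j} => P1 ω k), P2 ω)) μ)
    (hind2 : ∀ j, H2 j = false →
      IndepFun (fun ω => P2 ω j)
        (fun ω => ((fun k : {k : Fin m // k ≠ j} => P2 ω k), P1 ω)) μ)
    -- stable (measurable) selection rules
    (S1 S2 : (Fin m → ℝ) → Finset (Fin m))
    (hstable1 : StableSelection S1) (hstable2 : StableSelection S2)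
    (hS1 : ∀ j, MeasurableSet {p : Fin m → ℝ | j ∈ S1 p})
    (hS2 : ∀ j, MeasurableSet {p : Fin m → ℝ | j ∈ S2 p})
    (α α₁ : ℝ) (hα₁ : α₁ ∈ Set.Ioo (0:ℝ) α) :
    ∫ ω, fdpRepl H1 H2
        (stepUpReject (↑(S1 (P1 ω) ∩ S2 (P2 ω))) (P1 ω) (P2 ω)
          (α₁ / (S2 (P2 ω)).card) ((α - α₁) / (S1 (P1 ω)).card)) ∂μ
      ≤ α := by
  have hα₁0 : 0 ≤ α₁ := hα₁.1.le
  have hα₂0 : 0 ≤ α - α₁ := sub_nonneg.2 hα₁.2.le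
  refine integral_le_of_lintegral_ofReal_le (fun _ => fdpRepl_nonneg _ _ _)
    (hα₁.1.trans hα₁.2).le ?_
  calc _ ≤ _ := lintegral_ofReal_fdpRepl_le hP1 hP2 hS1 hS2 H1 H2
    _ ≤ ENNReal.ofReal α₁ + ENNReal.ofReal (α - α₁) := by
        gcongr
        · exact sum_lintegral_rejectionShare_le hP1 hP2 hstable1 hS1 hS2 hα₁0 hα₂0
            (fun j hj => hunif1 j (Finset.mem_filter.1 hj).2)
            (fun j hj => hind1 j (Finset.mem_filter.1 hj).2)
        · exact sum_lintegral_rejectionShare_le hP2 hP1 hstable2 hS2 hS1 hα₂0 hα₁0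
            (fun j hj => hunif2 j (Finset.mem_filter.1 hj).2)
            (fun j hj => hind2 j (Finset.mem_filter.1 hj).2)
    _ = ENNReal.ofReal α := by rw [← ENNReal.ofReal_add hα₁0 hα₂0, add_sub_cancel]

/-- Theorem 2, item 1.  If each null p-value is independent of all the
other `2m − 1` p-values of the two studies, null p-values are stochastically at least
uniform, and the selection rules are stable, then the step-up FDR-replicability procedure
on `𝒮₁ ∩ 𝒮₂` with thresholds `(rα₁/S₂, r(α−α₁)/S₁)` controls the FDR for replicability
analysis at level `α`. -/
theorem fdr_replicability_indep
    {Ω : Type*} [MeasurableSpace Ω] (μ : Measure Ω) [IsProbabilityMeasure μ]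
    (m : ℕ) (P1 P2 : Ω → Fin m → ℝ) (hP1 : Measurable P1) (hP2 : Measurable P2)
    (H1 H2 : Fin m → Bool)
    (hrange1 : ∀ ω j, P1 ω j ∈ Set.Icc (0:ℝ) 1) (hrange2 : ∀ ω j, P2 ω j ∈ Set.Icc (0:ℝ) 1)
    -- null p-values are stochastically at least uniform
    (hunif1 : ∀ j, H1 j = false → ∀ x ∈ Set.Icc (0:ℝ) 1,
      μ {ω | P1 ω j ≤ x} ≤ ENNReal.ofReal x)
    (hunif2 : ∀ j, H2 j = false → ∀ x ∈ Set.Icc (0:ℝ) 1,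
      μ {ω | P2 ω j ≤ x} ≤ ENNReal.ofReal x)
    -- each null p-value is independent of all the other 2m−1 p-values
    (hind1 : ∀ j, H1 j = false →
      IndepFun (fun ω => P1 ω j)
        (fun ω => ((fun k : {k : Fin m // k ≠ j} => P1 ω k), P2 ω)) μ)
    (hind2 : ∀ j, H2 j = false →
      IndepFun (fun ω => P2 ω j)
        (fun ω => ((fun k : {k : Fin m // k ≠ j} => P2 ω k), P1 ω)) μ)
    -- stable (measurable) selection rules
    (S1 S2 : (Fin m → ℝ) → Finset (Fin m))
    (hstable1 : StableSelection S1) (hstable2 : StableSelection S2)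
    (hS1 : ∀ j, MeasurableSet {p : Fin m → ℝ | j ∈ S1 p})
    (hS2 : ∀ j, MeasurableSet {p : Fin m → ℝ | j ∈ S2 p})
    (α α₁ : ℝ) (hα : α ∈ Set.Ioo (0:ℝ) 1) (hα₁ : α₁ ∈ Set.Ioo (0:ℝ) α) :
    ∫ ω, fdpRepl H1 H2
        (stepUpReject (↑(S1 (P1 ω) ∩ S2 (P2 ω))) (P1 ω) (P2 ω)
          (α₁ / (S2 (P2 ω)).card) ((α - α₁) / (S1 (P1 ω)).card)) ∂μ
      ≤ α :=
  fdr_replicability_indep_general μ m P1 P2 hP1 hP2 H1 H2 hunif1 hunif2 hind1 hind2 S1 S2 hstable1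
    hstable2 hS1 hS2 α α₁ hα₁
end

section
/- Let S be a finite nonempty index set, c ∈ (0,1), W₁, W₂ > 0, α > 0, and let p_{1j}, p_{2j} ∈ [0,1] for j ∈ S. Define the Bonferroni-type r-values r_j = max(W₁p_{1j}/c, W₂p_{2j}/(1−c)) for j ∈ S, and the FDR r-values r_j^{FDR} = min{ r_i / rank(r_i) : i ∈ S, r_i ≥ r_j }, where rank(r_i) is the rank of r_i among {r_k : k ∈ S} with maximum rank assigned to ties. Let R = max{r ∈ ℕ : #{j ∈ S : p_{1j} ≤ r·cα/W₁ and p_{2j} ≤ r·(1−c)α/W₂} = r}. Then {j ∈ S : r_j^{FDR} ≤ α} = {j ∈ S : r_j ≤ Rα}. (Lemma 2, item 1: the FDR r-value thresholding procedure is equivalent to the step-up procedure.) -/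
/-- Auxiliary fixed point lemma: a monotone bounded `f : ℕ → ℕ` with `m ≤ f m`
has a fixed point `n ≥ m`. -/
lemma exists_fixed_point_aux (f : ℕ → ℕ) (B : ℕ) (hmono : Monotone f)
    (hB : ∀ n, f n ≤ B) (m : ℕ) (hm : m ≤ f m) : ∃ n, m ≤ n ∧ f n = n := by
  set T : Set ℕ := {n | m ≤ n ∧ n ≤ f n} with hT
  have hne : T.Nonempty := ⟨m, le_refl m, hm⟩
  have hbdd : BddAbove T := ⟨B, fun n hn => le_trans hn.2 (hB n)⟩
  have hmem : sSup T ∈ T := Nat.sSup_mem hne hbdd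
  refine ⟨sSup T, hmem.1, ?_⟩
  by_contra h
  have hlt : sSup T < f (sSup T) := lt_of_le_of_ne hmem.2 (fun h' => h h'.symm)
  have hmem2 : sSup T + 1 ∈ T :=
    ⟨le_trans hmem.1 (Nat.le_succ _), le_trans hlt (hmono (Nat.le_succ _))⟩
  have := le_csSup hbdd hmem2
  omega

/-- Lemma 2, item 1.  Let `S` be a finite nonempty index set,
`c ∈ (0,1)`, `W₁, W₂ > 0`, `α > 0`, and p-values `p1 j, p2 j ∈ [0,1]` for `j ∈ S`.
With Bonferroni-type r-values `r j = max(W₁ p1 j / c, W₂ p2 j / (1−c))`, ranks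
`rank i = #{k ∈ S : r k ≤ r i}` (maximum rank for ties), FDR r-values
`rFDR j = min{ r i / rank i : i ∈ S, r i ≥ r j }`, and
`R = max{r ∈ ℕ : #{j ∈ S : p1 j ≤ r·cα/W₁ ∧ p2 j ≤ r·(1−c)α/W₂} = r}`,
one has `{j ∈ S : rFDR j ≤ α} = {j ∈ S : r j ≤ Rα}`. -/
theorem fdr_rvalue_stepup_equivalence
    {ι : Type*} (S : Finset ι) (hS : S.Nonempty)
    (c : ℝ) (hc : c ∈ Set.Ioo (0:ℝ) 1)
    (W1 W2 : ℝ) (hW1 : 0 < W1) (hW2 : 0 < W2)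
    (α : ℝ) (hα : 0 < α)
    (p1 p2 : ι → ℝ)
    (hp1 : ∀ j ∈ S, p1 j ∈ Set.Icc (0:ℝ) 1) (hp2 : ∀ j ∈ S, p2 j ∈ Set.Icc (0:ℝ) 1) :
    let r : ι → ℝ := fun j => max (W1 * p1 j / c) (W2 * p2 j / (1 - c))
    let rank : ι → ℕ := fun i => Nat.card {k : ι // k ∈ S ∧ r k ≤ r i}
    let rFDR : ι → ℝ := fun j => sInf {x : ℝ | ∃ i ∈ S, r j ≤ r i ∧ x = r i / (rank i : ℝ)}
    let R : ℕ := sSup {n : ℕ |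
      Nat.card {j : ι // j ∈ S ∧ p1 j ≤ n * (c * α) / W1 ∧ p2 j ≤ n * ((1 - c) * α) / W2} = n}
    {j : ι | j ∈ S ∧ rFDR j ≤ α} = {j : ι | j ∈ S ∧ r j ≤ (R : ℝ) * α} := by
  obtain ⟨hc0, hc1⟩ := hc
  have h1c : 0 < 1 - c := by linarith
  intro r rank rFDR R
  -- the counting function
  set N : ℝ → ℕ := fun t => (S.filter (fun k => r k ≤ t)).card with hN
  have hNmono : ∀ {s t : ℝ}, s ≤ t → N s ≤ N t := by
    intro s t hst
    apply Finset.card_le_card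
    intro k hk
    simp only [Finset.mem_filter] at hk ⊢
    exact ⟨hk.1, le_trans hk.2 hst⟩
  have hNB : ∀ t, N t ≤ S.card := fun t => Finset.card_le_card (Finset.filter_subset _ _)
  -- rank as a finset card
  have hrank : ∀ i, rank i = (S.filter (fun k => r k ≤ r i)).card := by
    intro i
    have e : {k : ι // k ∈ S ∧ r k ≤ r i} ≃ {k : ι // k ∈ S.filter (fun k => r k ≤ r i)} :=
      Equiv.subtypeEquivRight (by intro k; simp [Finset.mem_filter])
    calc rank i = Nat.card {k : ι // k ∈ S ∧ r k ≤ r i} := rfl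
      _ = Nat.card {k : ι // k ∈ S.filter (fun k => r k ≤ r i)} := Nat.card_congr e
      _ = (S.filter (fun k => r k ≤ r i)).card := Nat.card_eq_finsetCard _
  -- the counting condition in terms of r
  have hiff : ∀ (n : ℕ) (j : ι),
      (p1 j ≤ (n : ℝ) * (c * α) / W1 ∧ p2 j ≤ (n : ℝ) * ((1 - c) * α) / W2) ↔ r j ≤ (n : ℝ) * α := by
    intro n j
    have h1 : W1 * p1 j / c ≤ (n : ℝ) * α ↔ p1 j ≤ (n : ℝ) * (c * α) / W1 := by
      rw [div_le_iff₀ hc0, le_div_iff₀ hW1]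
      constructor <;> intro h <;> nlinarith
    have h2 : W2 * p2 j / (1 - c) ≤ (n : ℝ) * α ↔ p2 j ≤ (n : ℝ) * ((1 - c) * α) / W2 := by
      rw [div_le_iff₀ h1c, le_div_iff₀ hW2]
      constructor <;> intro h <;> nlinarith
    simp only [r, max_le_iff]
    rw [h1, h2]
  have hcount : ∀ n : ℕ,
      Nat.card {j : ι // j ∈ S ∧ p1 j ≤ (n:ℝ) * (c * α) / W1 ∧ p2 j ≤ (n:ℝ) * ((1 - c) * α) / W2}
        = N ((n : ℝ) * α) := by
    intro n
    have e : {j : ι // j ∈ S ∧ p1 j ≤ (n:ℝ) * (c * α) / W1 ∧ p2 j ≤ (n:ℝ) * ((1 - c) * α) / W2}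
        ≃ {j : ι // j ∈ S.filter (fun k => r k ≤ (n : ℝ) * α)} :=
      Equiv.subtypeEquivRight (by
        intro j; simp only [Finset.mem_filter]
        constructor
        · rintro ⟨h1, h2⟩; exact ⟨h1, (hiff n j).mp h2⟩
        · rintro ⟨h1, h2⟩; exact ⟨h1, (hiff n j).mpr h2⟩)
    rw [Nat.card_congr e, Nat.card_eq_finsetCard]
  -- R is a fixed point
  have hMeq : {n : ℕ |
      Nat.card {j : ι // j ∈ S ∧ p1 j ≤ (n:ℝ) * (c * α) / W1 ∧ p2 j ≤ (n:ℝ) * ((1 - c) * α) / W2} = n}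
      = {n : ℕ | N ((n : ℝ) * α) = n} := by
    ext n; simp only [Set.mem_setOf_eq, hcount n]
  have hfmono : Monotone (fun n : ℕ => N ((n : ℝ) * α)) := by
    intro a b hab
    exact hNmono (mul_le_mul_of_nonneg_right (by exact_mod_cast hab) hα.le)
  have hMne : {n : ℕ | N ((n : ℝ) * α) = n}.Nonempty := by
    obtain ⟨n, _, hn⟩ := exists_fixed_point_aux (fun n : ℕ => N ((n : ℝ) * α)) S.card
      hfmono (fun n => hNB _) 0 (Nat.zero_le _)
    exact ⟨n, hn⟩
  have hMbdd : BddAbove {n : ℕ | N ((n : ℝ) * α) = n} :=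
    ⟨S.card, fun n hn => hn ▸ hNB _⟩
  have hRdef : R = sSup {n : ℕ | N ((n : ℝ) * α) = n} := by
    simp only [R, hMeq]
  have hRfix : N ((R : ℝ) * α) = R := by
    rw [hRdef]; exact Nat.sSup_mem hMne hMbdd
  -- rFDR as a finset min
  have hrFDR : ∀ j ∈ S, (rFDR j ≤ α ↔ ∃ i ∈ S, r j ≤ r i ∧ r i / (rank i : ℝ) ≤ α) := by
    intro j hj
    set A : Finset ℝ := (S.filter (fun i => r j ≤ r i)).image (fun i => r i / (rank i : ℝ))
      with hA
    have hAne : A.Nonempty :=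
      ⟨r j / (rank j : ℝ), Finset.mem_image.mpr
        ⟨j, Finset.mem_filter.mpr ⟨hj, le_refl _⟩, rfl⟩⟩
    have hsetA : {x : ℝ | ∃ i ∈ S, r j ≤ r i ∧ x = r i / (rank i : ℝ)} = ↑A := by
      ext x
      simp only [Set.mem_setOf_eq, hA, Finset.coe_image, Set.mem_image, Finset.mem_coe,
        Finset.mem_filter]
      constructor
      · rintro ⟨i, hi, hji, hx⟩; exact ⟨i, ⟨hi, hji⟩, hx.symm⟩
      · rintro ⟨i, ⟨hi, hji⟩, hx⟩; exact ⟨i, hi, hji, hx.symm⟩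
    have hval : rFDR j = A.min' hAne := by
      show sInf {x : ℝ | ∃ i ∈ S, r j ≤ r i ∧ x = r i / (rank i : ℝ)} = A.min' hAne
      rw [hsetA]; exact hAne.csInf_eq_min'
    rw [hval]
    constructor
    · intro h
      obtain ⟨i, hi, hx⟩ := Finset.mem_image.mp (A.min'_mem hAne)
      obtain ⟨hiS, hji⟩ := Finset.mem_filter.mp hi
      exact ⟨i, hiS, hji, hx.symm ▸ h⟩
    · rintro ⟨i, hi, hji, hle⟩
      exact le_trans (A.min'_le _ (Finset.mem_image.mpr
        ⟨i, Finset.mem_filter.mpr ⟨hi, hji⟩, rfl⟩)) hle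
  -- main equivalence
  ext j
  simp only [Set.mem_setOf_eq]
  constructor
  · rintro ⟨hj, hle⟩
    refine ⟨hj, ?_⟩
    obtain ⟨i, hi, hji, hdiv⟩ := (hrFDR j hj).mp hle
    have hrankeq : N (r i) = rank i := (hrank i).symm
    have hrankpos : 0 < rank i := by
      rw [hrank]
      exact Finset.card_pos.mpr ⟨i, Finset.mem_filter.mpr ⟨hi, le_refl _⟩⟩
    have hri : r i ≤ (rank i : ℝ) * α := by
      rw [div_le_iff₀ (by exact_mod_cast hrankpos)] at hdiv
      linarith
    have hfm : rank i ≤ N ((rank i : ℝ) * α) := by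
      calc rank i = N (r i) := hrankeq.symm
        _ ≤ N ((rank i : ℝ) * α) := hNmono hri
    obtain ⟨n, hmn, hn⟩ := exists_fixed_point_aux (fun n : ℕ => N ((n : ℝ) * α)) S.card
      hfmono (fun n => hNB _) (rank i) hfm
    have hnR : n ≤ R := by
      rw [hRdef]; exact le_csSup hMbdd hn
    calc r j ≤ r i := hji
      _ ≤ (rank i : ℝ) * α := hri
      _ ≤ (R : ℝ) * α := by
          apply mul_le_mul_of_nonneg_right _ hα.le
          exact_mod_cast le_trans hmn hnR
  · rintro ⟨hj, hle⟩
    refine ⟨hj, (hrFDR j hj).mpr ?_⟩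
    set F : Finset ι := S.filter (fun k => r k ≤ (R : ℝ) * α) with hF
    have hjF : j ∈ F := Finset.mem_filter.mpr ⟨hj, hle⟩
    obtain ⟨i, hiF, hmax⟩ := F.exists_max_image r ⟨j, hjF⟩
    obtain ⟨hiS, hile⟩ := Finset.mem_filter.mp hiF
    refine ⟨i, hiS, hmax j hjF, ?_⟩
    have hRle : R ≤ rank i := by
      rw [hrank]
      calc R = F.card := hRfix.symm
        _ ≤ (S.filter (fun k => r k ≤ r i)).card := by
            apply Finset.card_le_card
            intro k hk
            obtain ⟨hkS, _⟩ := Finset.mem_filter.mp hk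
            exact Finset.mem_filter.mpr ⟨hkS, hmax k hk⟩
    have hRpos : 0 < R := by
      rw [← hRfix]; exact Finset.card_pos.mpr ⟨j, hjF⟩
    have hrankpos : (0 : ℝ) < (rank i : ℝ) := by
      exact_mod_cast lt_of_lt_of_le hRpos hRle
    rw [div_le_iff₀ hrankpos]
    calc r i ≤ (R : ℝ) * α := hile
      _ ≤ (rank i : ℝ) * α := mul_le_mul_of_nonneg_right (by exact_mod_cast hRle) hα.le
      _ = α * (rank i : ℝ) := mul_comm _ _
end

section
/- Let α₁, α₂ > 0, and let G₁, G₂ be monotone increasing (nondecreasing) functions taking strictly positive values. Suppose (t₁*, t₂*) solves the two equations t₁ = α₁/G₂(t₂) and t₂ = α₂/G₁(t₁). Then there does not exist a pair (t₁, t₂) that dominates (t₁*, t₂*) in the following sense: min(t₁, α₁/G₂(t₂)) ≥ min(t₁*, α₁/G₂(t₂*)) and min(α₂/G₁(t₁), t₂) ≥ min(α₂/G₁(t₁*), t₂*), with strict inequality in at least one of the two coordinates. (Lemma 3: the solution of the fixed-point equations is not dominated by any other choice of thresholds.) -/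
/-- Lemma 3.  Let `α₁, α₂ > 0` and let `G₁, G₂` be monotone
(nondecreasing) strictly positive real functions.  If `(t₁*, t₂*)` solves
`t₁ = α₁/G₂(t₂)` and `t₂ = α₂/G₁(t₁)`, then no pair `(t₁, t₂)` dominates `(t₁*, t₂*)`:
there is no `(t₁, t₂)` with `min(t₁, α₁/G₂(t₂)) ≥ min(t₁*, α₁/G₂(t₂*))` and
`min(α₂/G₁(t₁), t₂) ≥ min(α₂/G₁(t₁*), t₂*)`, with strict inequality in at least one
coordinate. -/
theorem fixed_point_thresholds_not_dominated
    (α₁ α₂ : ℝ) (hα₁ : 0 < α₁) (hα₂ : 0 < α₂)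
    (G1 G2 : ℝ → ℝ) (hG1mono : Monotone G1) (hG2mono : Monotone G2)
    (hG1pos : ∀ t, 0 < G1 t) (hG2pos : ∀ t, 0 < G2 t)
    (t1s t2s : ℝ) (ht1 : t1s = α₁ / G2 t2s) (ht2 : t2s = α₂ / G1 t1s) :
    ¬ ∃ t1 t2 : ℝ,
        (min t1s (α₁ / G2 t2s) ≤ min t1 (α₁ / G2 t2) ∧
         min (α₂ / G1 t1s) t2s ≤ min (α₂ / G1 t1) t2) ∧
        (min t1s (α₁ / G2 t2s) < min t1 (α₁ / G2 t2) ∨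
         min (α₂ / G1 t1s) t2s < min (α₂ / G1 t1) t2) := by
  rintro ⟨t1, t2, ⟨h1, h2⟩, hs⟩
  rw [← ht1, min_self] at h1
  rw [← ht2, min_self] at h2
  have ht1le : t1s ≤ t1 := le_trans h1 (min_le_left _ _)
  have ht2le : t2s ≤ t2 := le_trans h2 (min_le_right _ _)
  rcases hs with hs | hs
  · rw [← ht1, min_self] at hs
    have hd : t1s < α₁ / G2 t2 := lt_of_lt_of_le hs (min_le_right _ _)
    rw [ht1] at hd
    have : G2 t2 < G2 t2s :=
      (div_lt_div_iff_of_pos_left hα₁ (hG2pos _) (hG2pos _)).mp hd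
    exact absurd (hG2mono ht2le) (not_le.mpr this)
  · rw [← ht2, min_self] at hs
    have hd : t2s < α₂ / G1 t1 := lt_of_lt_of_le hs (min_le_left _ _)
    rw [ht2] at hd
    have : G1 t1 < G1 t1s :=
      (div_lt_div_iff_of_pos_left hα₂ (hG1pos _) (hG1pos _)).mp hd
    exact absurd (hG1mono ht1le) (not_le.mpr this)
end

section
/- Let Q₁,…,Q_n be jointly independent random variables with values in [0,1], and let N ⊆ {1,…,n} be a set of indices such that Pr(Q_i ≤ x) ≤ x for all x ∈ [0,1] and every i ∈ N. Fix λ ∈ (0,1) and α ∈ (0,1). Then Pr(there exists i ∈ N with Q_i ≤ min(λ, α(1−λ)/(1 + #{j ∈ {1,…,n} : Q_j > λ}))) ≤ α. Equivalently, the Bonferroni procedure using the plug-in estimator π̂₀ = (1 + #{j : Q_j > λ})/(n(1−λ)), which rejects i when Q_i ≤ min(λ, α/(n·π̂₀)), has probability at most α of rejecting any index in N. (The key single-family inequality established in the proof of Theorem 3.) -/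
open MeasureTheory ProbabilityTheory

/-!
For `i ∈ N` let `Sᵢ` count the indices `j ∈ N \ {i}` with `Q_j > λ`; it is independent of `Q_i`
and only smaller than the full count, so conditioning on `Sᵢ = k` and using super-uniformity,
`P(Q_i ≤ threshold) ≤ α (1 - λ) E[1/(1 + Sᵢ)] ≤ α E[1{Q_i > λ}/(1 + Sᵢ)]`, the second step because
`1 - λ ≤ P(Q_i > λ)` and by independence. On `{Q_i > λ}` the number `1 + Sᵢ` is the count of all
`j ∈ N` with `Q_j > λ`, so summing over `i ∈ N` the integrands add up to at most `1`.
-/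

open Finset
open scoped ENNReal

/-- The rejection threshold `min(λ, α / (n π̂₀))` of the plug-in Bonferroni procedure when
`k = #{j : Q_j > λ}`. -/
noncomputable def pluginThreshold (lam α : ℝ) (k : ℕ) : ℝ :=
  min lam (α * (1 - lam) / (1 + k))

lemma pluginThreshold_antitone {lam α : ℝ} (h : 0 ≤ α * (1 - lam)) :
    Antitone (pluginThreshold lam α) := fun k l hkl => by
  unfold pluginThreshold
  gcongr

lemma pluginThreshold_natCard_le_card_filter {ι : Type*} [Fintype ι] {lam α : ℝ}
    (h : 0 ≤ α * (1 - lam)) (p : ι → Prop) [DecidablePred p] (T : Finset ι) :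
    pluginThreshold lam α (Nat.card {j // p j}) ≤ pluginThreshold lam α #{j ∈ T | p j} := by
  refine pluginThreshold_antitone h ?_
  rw [Nat.card_eq_fintype_card, Fintype.card_subtype]
  exact card_le_card (filter_subset_filter _ (subset_univ _))

lemma Finset.sum_ite_inv_card_filter_erase_add_one_le_one {ι : Type*} [DecidableEq ι]
    (N : Finset ι) (p : ι → Prop) [DecidablePred p] :
    ∑ i ∈ N, (if p i then ((#{j ∈ N.erase i | p j} : ℝ≥0∞) + 1)⁻¹ else 0) ≤ 1 := by
  have hcard : ∀ i ∈ N.filter p, (#{j ∈ N.erase i | p j} : ℝ≥0∞) + 1 = #(N.filter p) := by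
    intro i hi
    rw [filter_erase, ← card_erase_add_one hi]
    push_cast
    rfl
  rw [← sum_filter, sum_congr rfl fun i hi => congrArg Inv.inv (hcard i hi), sum_const,
    nsmul_eq_mul]
  exact ENNReal.mul_inv_le_one _

section

variable {Ω : Type*} [MeasurableSpace Ω] {μ : Measure Ω}

lemma ProbabilityTheory.IndepFun.measure_mem_comp_eq_lintegral {α κ : Type*}
    [MeasurableSpace α] [MeasurableSpace κ] [Countable κ] [MeasurableSingletonClass κ]
    {X : Ω → α} {S : Ω → κ} (h : IndepFun X S μ) (hX : Measurable X) (hS : Measurable S)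
    {A : κ → Set α} (hA : ∀ k, MeasurableSet (A k)) :
    μ {ω | X ω ∈ A (S ω)} = ∫⁻ ω, μ (X ⁻¹' A (S ω)) ∂μ := by
  have hsplit : {ω | X ω ∈ A (S ω)} = ⋃ k, X ⁻¹' A k ∩ S ⁻¹' {k} := by
    ext ω; simp
  calc μ {ω | X ω ∈ A (S ω)} = ∑' k, μ (X ⁻¹' A k ∩ S ⁻¹' {k}) := by
        rw [hsplit, measure_iUnion]
        · exact fun k l hkl => Disjoint.inter_right' _ <| Disjoint.inter_left' _ <|
            (Set.disjoint_singleton.2 hkl).preimage S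
        · exact fun k => (hX (hA k)).inter (hS (measurableSet_singleton k))
    _ = ∑' k, μ (X ⁻¹' A k) * μ.map S {k} := by
        congr! 2 with k
        rw [h.measure_inter_preimage_eq_mul _ _ (hA k) (measurableSet_singleton k),
          Measure.map_apply hS (measurableSet_singleton k)]
    _ = ∫⁻ ω, μ (X ⁻¹' A (S ω)) ∂μ := by
        rw [← lintegral_countable', lintegral_map (measurable_of_countable _) hS]

lemma measurable_card_filter_lt {ι : Type*} {Q : ι → Ω → ℝ} (hQ : ∀ i, Measurable (Q i))
    (lam : ℝ) (T : Finset ι) : Measurable fun ω => #{j ∈ T | lam < Q j ω} := by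
  simp only [card_filter]
  exact Finset.measurable_sum _ fun j _ =>
    Measurable.ite (measurableSet_lt measurable_const (hQ j)) measurable_const measurable_const

lemma ProbabilityTheory.iIndepFun.indepFun_card_filter_lt {ι : Type*} {Q : ι → Ω → ℝ}
    (hQ : iIndepFun Q μ) (hQm : ∀ i, Measurable (Q i)) (lam : ℝ) {i : ι} {T : Finset ι}
    (hi : i ∉ T) : IndepFun (Q i) (fun ω => #{j ∈ T | lam < Q j ω}) μ := by
  have h := hQ.indepFun_finset {i} T (disjoint_singleton_left.2 hi) hQm
  have hcount : Measurable fun v : T → ℝ => #{j ∈ T.attach | lam < v j} :=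
    measurable_card_filter_lt (fun j => measurable_pi_apply j) lam T.attach
  convert h.comp (measurable_pi_apply ⟨i, mem_singleton_self i⟩) hcount using 1
  · rfl
  · funext ω
    show _ = #(T.attach.filter fun j : T => lam < Q j ω)
    rw [filter_attach (fun j => lam < Q j ω), card_map, card_attach]

lemma measure_le_pluginThreshold_le [IsProbabilityMeasure μ] {X : Ω → ℝ} {S : Ω → ℕ}
    (hXS : IndepFun X S μ) (hX : Measurable X) (hS : Measurable S)
    (hunif : ∀ x ∈ Set.Icc (0:ℝ) 1, μ {ω | X ω ≤ x} ≤ ENNReal.ofReal x)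
    {lam α : ℝ} (hlam : lam ∈ Set.Icc (0:ℝ) 1) (hα : 0 ≤ α) :
    μ {ω | X ω ≤ pluginThreshold lam α (S ω)} ≤ ENNReal.ofReal α *
      ∫⁻ ω, (X ⁻¹' Set.Ioi lam).indicator 1 ω * ((S ω : ℝ≥0∞) + 1)⁻¹ ∂μ := by
  have h1lam : 0 ≤ 1 - lam := sub_nonneg.2 hlam.2
  have htail : ENNReal.ofReal (1 - lam) ≤ μ (X ⁻¹' Set.Ioi lam) := by
    rw [← Set.compl_Iic, Set.preimage_compl, prob_compl_eq_one_sub (hX measurableSet_Iic),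
      ENNReal.ofReal_sub _ hlam.1, ENNReal.ofReal_one]
    exact tsub_le_tsub_left (hunif lam hlam) 1
  have hrate : ∀ k : ℕ, μ {ω | X ω ≤ pluginThreshold lam α k} ≤
      ENNReal.ofReal α * μ (X ⁻¹' Set.Ioi lam) * ((k : ℝ≥0∞) + 1)⁻¹ := fun k =>
    calc μ {ω | X ω ≤ pluginThreshold lam α k}
        ≤ ENNReal.ofReal (pluginThreshold lam α k) :=
          hunif _ ⟨le_min hlam.1 (div_nonneg (mul_nonneg hα h1lam) (by positivity)),
            (min_le_left _ _).trans hlam.2⟩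
      _ ≤ ENNReal.ofReal (α * (1 - lam) / (1 + k)) :=
          ENNReal.ofReal_le_ofReal (min_le_right _ _)
      _ = ENNReal.ofReal α * ENNReal.ofReal (1 - lam) * ((k : ℝ≥0∞) + 1)⁻¹ := by
          rw [ENNReal.ofReal_div_of_pos (by positivity), ENNReal.ofReal_mul hα, div_eq_mul_inv,
            add_comm, ENNReal.ofReal_add (Nat.cast_nonneg k) zero_le_one, ENNReal.ofReal_natCast,
            ENNReal.ofReal_one]
      _ ≤ ENNReal.ofReal α * μ (X ⁻¹' Set.Ioi lam) * ((k : ℝ≥0∞) + 1)⁻¹ := by gcongr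
  have hf : Measurable fun ω => (X ⁻¹' Set.Ioi lam).indicator (1 : Ω → ℝ≥0∞) ω :=
    measurable_one.indicator (hX measurableSet_Ioi)
  have hg : Measurable fun ω => ((S ω : ℝ≥0∞) + 1)⁻¹ := by fun_prop
  have hindep : IndepFun (fun ω => (X ⁻¹' Set.Ioi lam).indicator (1 : Ω → ℝ≥0∞) ω)
      (fun ω => ((S ω : ℝ≥0∞) + 1)⁻¹) μ :=
    hXS.comp (φ := (Set.Ioi lam).indicator 1) (ψ := fun k : ℕ => ((k : ℝ≥0∞) + 1)⁻¹)
      (measurable_one.indicator measurableSet_Ioi) measurable_from_nat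
  calc μ {ω | X ω ≤ pluginThreshold lam α (S ω)}
      = ∫⁻ ω, μ (X ⁻¹' Set.Iic (pluginThreshold lam α (S ω))) ∂μ :=
        hXS.measure_mem_comp_eq_lintegral hX hS fun _ => measurableSet_Iic
    _ ≤ ∫⁻ ω, ENNReal.ofReal α * μ (X ⁻¹' Set.Ioi lam) * ((S ω : ℝ≥0∞) + 1)⁻¹ ∂μ :=
        lintegral_mono fun ω => hrate (S ω)
    _ = ENNReal.ofReal α * (μ (X ⁻¹' Set.Ioi lam) * ∫⁻ ω, ((S ω : ℝ≥0∞) + 1)⁻¹ ∂μ) := by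
        rw [lintegral_const_mul _ hg, mul_assoc]
    _ = ENNReal.ofReal α *
          ∫⁻ ω, (X ⁻¹' Set.Ioi lam).indicator 1 ω * ((S ω : ℝ≥0∞) + 1)⁻¹ ∂μ := by
        rw [← lintegral_indicator_one (hX measurableSet_Ioi)]
        exact congrArg _ (lintegral_mul_eq_lintegral_mul_lintegral_of_indepFun hf hg hindep).symm

end

theorem plugin_bonferroni_fwer_general
    {Ω : Type*} [MeasurableSpace Ω] (μ : Measure Ω) [IsProbabilityMeasure μ]
    (n : ℕ) (Q : Fin n → Ω → ℝ) (hQm : ∀ i, Measurable (Q i))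
    (hiid : iIndepFun Q μ)
    (N : Finset (Fin n))
    (hunif : ∀ i ∈ N, ∀ x ∈ Set.Icc (0:ℝ) 1, μ {ω | Q i ω ≤ x} ≤ ENNReal.ofReal x)
    (lam α : ℝ) (hlam : lam ∈ Set.Ioo (0:ℝ) 1) (hα : α ∈ Set.Ioo (0:ℝ) 1) :
    μ {ω | ∃ i ∈ N, Q i ω ≤
        min lam (α * (1 - lam) / (1 + (Nat.card {j : Fin n // lam < Q j ω} : ℝ)))}
      ≤ ENNReal.ofReal α := by
  have hα' : 0 ≤ α * (1 - lam) := mul_nonneg hα.1.le (sub_nonneg.2 hlam.2.le)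
  set S : Fin n → Ω → ℕ := fun i ω => #{j ∈ N.erase i | lam < Q j ω}
  set w : Fin n → Ω → ℝ≥0∞ := fun i ω =>
    (Q i ⁻¹' Set.Ioi lam).indicator 1 ω * ((S i ω : ℝ≥0∞) + 1)⁻¹
  have hS : ∀ i, Measurable (S i) := fun i => measurable_card_filter_lt hQm lam _
  have hw : ∀ i, Measurable (w i) := fun i =>
    (measurable_one.indicator (hQm i measurableSet_Ioi)).mul (by fun_prop)
  have hw_sum : ∀ ω, ∑ i ∈ N, w i ω ≤ 1 := fun ω => by
    refine le_of_eq_of_le (sum_congr rfl fun i _ => ?_)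
      (N.sum_ite_inv_card_filter_erase_add_one_le_one (lam < Q · ω))
    by_cases h : lam < Q i ω <;> simp [h, w, S]
  calc μ {ω | ∃ i ∈ N, Q i ω ≤ pluginThreshold lam α (Nat.card {j // lam < Q j ω})}
      ≤ μ (⋃ i ∈ N, {ω | Q i ω ≤ pluginThreshold lam α (S i ω)}) :=
        measure_mono fun ω ⟨i, hi, hle⟩ => Set.mem_biUnion hi
          (hle.trans (pluginThreshold_natCard_le_card_filter hα' _ _))
    _ ≤ ∑ i ∈ N, ENNReal.ofReal α * ∫⁻ ω, w i ω ∂μ :=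
        (measure_biUnion_finset_le _ _).trans <| sum_le_sum fun i hi =>
          measure_le_pluginThreshold_le (hiid.indepFun_card_filter_lt hQm lam (notMem_erase i N))
            (hQm i) (hS i) (hunif i hi) ⟨hlam.1.le, hlam.2.le⟩ hα.1.le
    _ = ENNReal.ofReal α * ∫⁻ ω, ∑ i ∈ N, w i ω ∂μ := by
        rw [← mul_sum, lintegral_finsetSum _ fun i _ => hw i]
    _ ≤ ENNReal.ofReal α := by
        grw [lintegral_mono hw_sum, lintegral_one, measure_univ, mul_one]

/-- key single-family inequality in the proof of Theorem 3.
Let `Q₁, …, Q_n` be jointly independent `[0,1]`-valued random variables and `N` a set of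
null indices whose variables are stochastically at least uniform.  For `λ, α ∈ (0,1)`,
the Bonferroni procedure using the plug-in estimator
`π̂₀ = (1 + #{j : Q_j > λ})/(n(1−λ))`, which rejects `i` when
`Q_i ≤ min(λ, α/(n·π̂₀)) = min(λ, α(1−λ)/(1 + #{j : Q_j > λ}))`, has probability at
most `α` of rejecting any index in `N`. -/
theorem plugin_bonferroni_fwer
    {Ω : Type*} [MeasurableSpace Ω] (μ : Measure Ω) [IsProbabilityMeasure μ]
    (n : ℕ) (Q : Fin n → Ω → ℝ) (hQm : ∀ i, Measurable (Q i))
    (hQrange : ∀ i ω, Q i ω ∈ Set.Icc (0:ℝ) 1)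
    (hiid : iIndepFun Q μ)
    (N : Finset (Fin n))
    (hunif : ∀ i ∈ N, ∀ x ∈ Set.Icc (0:ℝ) 1, μ {ω | Q i ω ≤ x} ≤ ENNReal.ofReal x)
    (lam α : ℝ) (hlam : lam ∈ Set.Ioo (0:ℝ) 1) (hα : α ∈ Set.Ioo (0:ℝ) 1) :
    μ {ω | ∃ i ∈ N, Q i ω ≤
        min lam (α * (1 - lam) / (1 + (Nat.card {j : Fin n // lam < Q j ω} : ℝ)))}
      ≤ ENNReal.ofReal α :=
  plugin_bonferroni_fwer_general μ n Q hQm hiid N hunif lam α hlam hα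
end

section
/- Let N be a finite nonempty index set, λ ∈ (0,1), and let (Q_j)_{j∈N} be jointly independent random variables with values in [0,1] such that Pr(Q_j ≤ x) ≤ x for all x ∈ [0,1] and every j ∈ N. Then for every i ∈ N, E[ 1 / (1 + Σ_{j∈N, j≠i} 1[Q_j > λ]) ] ≤ 1/((1−λ)·|N|). (The extension, used in the proofs of Theorems 3 and 4, of Benjamini–Yekutieli's binomial expectation bound E(1/(Y+1)) < 1/(kp) for Y ~ Binomial(k−1,p) to stochastically-larger-than-uniform p-values.) -/
/-!
Write `1 / (1 + N) = ∫₀¹ t ^ N dt`, where `N` counts the events `A j` that occur, and swap the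
integrals. By independence `E[t ^ N] = ∏ⱼ (1 - (1 - t) P(A j)) ≤ (1 - p (1 - t)) ^ n` when every
`P(A j) ≥ p`, and `∫₀¹ (1 - p (1 - t)) ^ n dt = (1 - (1 - p) ^ (n + 1)) / (p (n + 1))`.
For the theorem, `A j = {λ < Q j}` has probability at least `1 - λ`.
-/

open MeasureTheory ProbabilityTheory

lemma ProbabilityTheory.iIndepFun.iIndepSet_preimage {Ω ι β : Type*} [MeasurableSpace Ω]
    [MeasurableSpace β] {μ : Measure Ω} {f : ι → Ω → β} (hf : iIndepFun f μ)
    (hfm : ∀ j, Measurable (f j)) {t : ι → Set β} (ht : ∀ j, MeasurableSet (t j)) :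
    iIndepSet (fun j ↦ f j ⁻¹' t j) μ :=
  (iIndepSet_iff_meas_biInter fun j ↦ hfm j (ht j)).2 fun S ↦
    iIndepFun_iff_measure_inter_preimage_eq_mul.1 hf S fun j _ ↦ ht j

lemma one_div_one_add_eq_integral_pow (n : ℕ) :
    1 / (1 + (n : ℝ)) = ∫ t in (0 : ℝ)..1, t ^ n := by
  simp [integral_pow, add_comm]

lemma integral_one_sub_mul_one_sub_pow {p : ℝ} (hp : p ≠ 0) (n : ℕ) :
    ∫ t in (0 : ℝ)..1, (1 - p * (1 - t)) ^ n = (1 - (1 - p) ^ (n + 1)) / (p * (n + 1)) :=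
  calc ∫ t in (0 : ℝ)..1, (1 - p * (1 - t)) ^ n
      = ∫ t in (0 : ℝ)..1, (p * t + (1 - p)) ^ n := by congr 1; ext t; ring
    _ = p⁻¹ * ∫ u in (1 - p)..1, u ^ n := by
      simp [intervalIntegral.integral_comp_mul_add (fun u ↦ u ^ n) hp]
    _ = (1 - (1 - p) ^ (n + 1)) / (p * (n + 1)) := by
      rw [integral_pow, one_pow]; field_simp

lemma integral_pow_indicator_one {Ω : Type*} [MeasurableSpace Ω] {μ : Measure Ω}
    [IsProbabilityMeasure μ] {A : Set Ω} (hA : MeasurableSet A) (t : ℝ) :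
    ∫ ω, t ^ A.indicator (1 : Ω → ℕ) ω ∂μ = 1 - (1 - t) * μ.real A := by
  have : (fun ω ↦ t ^ A.indicator (1 : Ω → ℕ) ω) = fun ω ↦ 1 - A.indicator (fun _ ↦ 1 - t) ω := by
    ext ω; by_cases h : ω ∈ A <;> simp [h]
  rw [this, integral_sub (integrable_const _) ((integrable_const _).indicator hA),
    integral_indicator_const _ hA]
  simp [mul_comm]

lemma Nat.card_subtype_mem_eq_sum_indicator {κ α : Type*} [Fintype κ] (A : κ → Set α) (x : α) :
    Nat.card {j // x ∈ A j} = ∑ j, (A j).indicator (1 : α → ℕ) x := by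
  classical
  rw [Nat.card_eq_fintype_card, Fintype.card_subtype, Finset.card_filter]
  simp [Set.indicator_apply]

section

variable {Ω κ : Type*} [MeasurableSpace Ω] {μ : Measure Ω} [IsProbabilityMeasure μ] [Fintype κ]
  {A : κ → Set Ω} {p : ℝ}

lemma integral_pow_card_le (hA : ∀ j, MeasurableSet (A j)) (hind : iIndepSet A μ)
    (hp : ∀ j, p ≤ μ.real (A j)) {t : ℝ} (ht0 : 0 ≤ t) (ht1 : t ≤ 1) :
    ∫ ω, t ^ Nat.card {j // ω ∈ A j} ∂μ ≤ (1 - p * (1 - t)) ^ Fintype.card κ := by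
  have hfactor : ∫ ω, t ^ Nat.card {j // ω ∈ A j} ∂μ = ∏ j, ∫ ω, t ^ (A j).indicator 1 ω ∂μ := by
    simp_rw [Nat.card_subtype_mem_eq_sum_indicator, ← Finset.prod_pow_eq_pow_sum]
    exact (hind.iIndepFun_indicator (β := ℕ)).integral_fun_prod_comp
      (fun j ↦ (measurable_const.indicator (hA j)).aemeasurable)
      (fun _ ↦ (measurable_of_countable _).aestronglyMeasurable)
  rw [hfactor, ← Finset.card_univ, ← Finset.prod_const]
  refine Finset.prod_le_prod (fun j _ ↦ integral_nonneg fun ω ↦ pow_nonneg ht0 _) fun j _ ↦ ?_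
  rw [integral_pow_indicator_one (hA j)]
  nlinarith [hp j]

lemma integral_one_div_one_add_card_le (hA : ∀ j, MeasurableSet (A j)) (hind : iIndepSet A μ)
    (hp0 : 0 < p) (hp1 : p ≤ 1) (hp : ∀ j, p ≤ μ.real (A j)) :
    ∫ ω, 1 / (1 + (Nat.card {j // ω ∈ A j} : ℝ)) ∂μ ≤ 1 / (p * (Fintype.card κ + 1)) := by
  set N : Ω → ℕ := fun ω ↦ Nat.card {j // ω ∈ A j}
  have hN : Measurable N := by
    simp_rw [N, Nat.card_subtype_mem_eq_sum_indicator]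
    exact Finset.measurable_sum _ fun j _ ↦ measurable_const.indicator (hA j)
  have hint : Integrable (Function.uncurry fun (t : ℝ) ω ↦ t ^ N ω)
      ((volume.restrict (Set.uIoc 0 1)).prod μ) := by
    rw [Set.uIoc_of_le zero_le_one]
    refine .of_bound (measurable_fst.pow (hN.comp measurable_snd)).aestronglyMeasurable 1 ?_
    filter_upwards [Measure.quasiMeasurePreserving_fst.ae (ae_restrict_mem measurableSet_Ioc)]
      with z hz
    simpa [Function.uncurry, abs_of_pos hz.1] using pow_le_one₀ hz.1.le hz.2
  calc ∫ ω, 1 / (1 + (N ω : ℝ)) ∂μ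
      = ∫ ω, (∫ t in (0 : ℝ)..1, t ^ N ω) ∂μ := by simp_rw [one_div_one_add_eq_integral_pow]
    _ = ∫ t in (0 : ℝ)..1, ∫ ω, t ^ N ω ∂μ := (intervalIntegral_integral_swap hint).symm
    _ ≤ ∫ t in (0 : ℝ)..1, (1 - p * (1 - t)) ^ Fintype.card κ := by
      refine intervalIntegral.integral_mono_on zero_le_one
        (intervalIntegrable_iff.2 hint.integral_prod_left)
        ((by fun_prop : Continuous _).intervalIntegrable _ _) fun t ht ↦
        integral_pow_card_le hA hind hp ht.1 ht.2
    _ = (1 - (1 - p) ^ (Fintype.card κ + 1)) / (p * (Fintype.card κ + 1)) :=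
      integral_one_sub_mul_one_sub_pow hp0.ne' _
    _ ≤ 1 / (p * (Fintype.card κ + 1)) := by
      gcongr
      exact sub_le_self _ (pow_nonneg (sub_nonneg.2 hp1) _)

lemma one_sub_le_probReal_lt {X : Ω → ℝ} (hX : Measurable X) {x : ℝ} (hx : 0 ≤ x)
    (hXx : μ {ω | X ω ≤ x} ≤ ENNReal.ofReal x) : 1 - x ≤ μ.real {ω | x < X ω} := by
  have hle : μ.real {ω | X ω ≤ x} ≤ x := ENNReal.toReal_le_of_le_ofReal hx hXx
  have hcompl : {ω | x < X ω} = {ω | X ω ≤ x}ᶜ := by ext ω; simp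
  rw [hcompl, probReal_compl_eq_one_sub (measurableSet_le hX measurable_const)]
  linarith

end

theorem expectation_inv_one_add_count_le_general
    {Ω : Type*} [MeasurableSpace Ω] (μ : Measure Ω) [IsProbabilityMeasure μ]
    {ι : Type*} [Fintype ι]
    (Q : ι → Ω → ℝ) (hQm : ∀ i, Measurable (Q i))
    (hiid : iIndepFun Q μ)
    (hunif : ∀ i, ∀ x ∈ Set.Icc (0:ℝ) 1, μ {ω | Q i ω ≤ x} ≤ ENNReal.ofReal x)
    (lam : ℝ) (hlam : lam ∈ Set.Ioo (0:ℝ) 1) (i : ι) :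
    ∫ ω, 1 / (1 + (Nat.card {j : ι // j ≠ i ∧ lam < Q j ω} : ℝ)) ∂μ ≤
      1 / ((1 - lam) * (Fintype.card ι : ℝ)) := by
  classical
  obtain ⟨hlam0, hlam1⟩ := hlam
  set A : {j // j ≠ i} → Set Ω := fun j ↦ Q j ⁻¹' Set.Ioi lam
  have hA (j) : MeasurableSet (A j) := hQm j measurableSet_Ioi
  have hind : iIndepSet A μ := (hiid.precomp Subtype.val_injective).iIndepSet_preimage
    (fun j ↦ hQm j) fun _ ↦ measurableSet_Ioi
  have hp (j : {j // j ≠ i}) : 1 - lam ≤ μ.real (A j) :=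
    one_sub_le_probReal_lt (hQm j) hlam0.le (hunif j lam ⟨hlam0.le, hlam1.le⟩)
  have hcount (ω) : Nat.card {j : ι // j ≠ i ∧ lam < Q j ω} = Nat.card {j // ω ∈ A j} :=
    Nat.card_congr (Equiv.subtypeSubtypeEquivSubtypeInter _ _).symm
  have hcard : (Fintype.card {j // j ≠ i} : ℝ) + 1 = Fintype.card ι := by
    rw [Fintype.card_subtype_compl, Fintype.card_subtype_eq]
    have : 0 < Fintype.card ι := Fintype.card_pos_iff.2 ⟨i⟩
    norm_cast; omega
  simpa only [hcount, hcard] using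
    integral_one_div_one_add_card_le hA hind (sub_pos.2 hlam1) (by linarith) hp

/-- extension of the Benjamini–Yekutieli binomial expectation bound.
Let `(Q_j)_{j ∈ N}` (with `N` finite and nonempty) be jointly independent `[0,1]`-valued
random variables, each stochastically at least uniform.  Then for every `i ∈ N`,
`E[1/(1 + Σ_{j ≠ i} 1[Q_j > λ])] ≤ 1/((1−λ)·|N|)`. -/
theorem expectation_inv_one_add_count_le
    {Ω : Type*} [MeasurableSpace Ω] (μ : Measure Ω) [IsProbabilityMeasure μ]
    {ι : Type*} [Fintype ι] [Nonempty ι]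
    (Q : ι → Ω → ℝ) (hQm : ∀ i, Measurable (Q i))
    (hQrange : ∀ i ω, Q i ω ∈ Set.Icc (0:ℝ) 1)
    (hiid : iIndepFun Q μ)
    (hunif : ∀ i, ∀ x ∈ Set.Icc (0:ℝ) 1, μ {ω | Q i ω ≤ x} ≤ ENNReal.ofReal x)
    (lam : ℝ) (hlam : lam ∈ Set.Ioo (0:ℝ) 1) (i : ι) :
    ∫ ω, 1 / (1 + (Nat.card {j : ι // j ≠ i ∧ lam < Q j ω} : ℝ)) ∂μ ≤
      1 / ((1 - lam) * (Fintype.card ι : ℝ)) :=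
  expectation_inv_one_add_count_le_general μ Q hQm hiid hunif lam hlam i
end

section
/- Let S be a positive integer, a ≥ 0 a real number, and let F₀, F₁, …, F_S be real numbers satisfying F₀ ≥ 0 and 0 ≤ F_l ≤ l·a for every l ∈ {1,…,S}. Then Σ_{l=1}^{S} (1/l)·(F_l − F_{l−1}) ≤ a·Σ_{l=1}^{S} 1/l. (The summation-by-parts inequality established, for F_l the conditional distribution function of a null p-value evaluated at grid points l·a, in the proof of the arbitrary-dependence FDR result, Theorem 2 item 2.) -/
private lemma abel_aux (a : ℝ) (ha : 0 ≤ a) (F : ℕ → ℝ) (hF0 : 0 ≤ F 0) :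
    ∀ S, 1 ≤ S → (∀ l, 1 ≤ l → l ≤ S → 0 ≤ F l ∧ F l ≤ (l : ℝ) * a) →
    ∑ l ∈ Finset.Icc 1 S, (1 / (l : ℝ)) * (F l - F (l - 1)) ≤
      a * (∑ l ∈ Finset.Icc 1 S, 1 / (l : ℝ)) - a + F S / S := by
  intro S hS1
  induction S, hS1 using Nat.le_induction with
  | base =>
    intro hF
    simp only [Finset.Icc_self, Finset.sum_singleton, Nat.cast_one]
    have := hF 1 le_rfl le_rfl
    nlinarith [this.1, this.2]
  | succ n hn ih =>
    intro hF
    have hFn := hF n hn (Nat.le_succ n)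
    have hFn1 := hF (n+1) (Nat.le_succ_of_le hn) le_rfl
    have ihh := ih (fun l h1 h2 => hF l h1 (Nat.le_succ_of_le h2))
    have h1 : (1:ℕ) ≤ n + 1 := Nat.le_succ_of_le hn
    rw [Finset.sum_Icc_succ_top h1, Finset.sum_Icc_succ_top h1]
    have hnpos : (0:ℝ) < n := by exact_mod_cast hn
    have hn1pos : (0:ℝ) < (n:ℝ) + 1 := by linarith
    have hcast : ((n + 1 : ℕ) : ℝ) = (n : ℝ) + 1 := by push_cast; ring
    have hsub : (n + 1 - 1 : ℕ) = n := rfl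
    rw [hsub, hcast]
    have key : F n / (n:ℝ) - F n / ((n:ℝ)+1) ≤ a / ((n:ℝ)+1) := by
      have h2 : F n / (n:ℝ) - F n / ((n:ℝ)+1) = F n / ((n:ℝ) * ((n:ℝ)+1)) := by
        field_simp; ring
      rw [h2, div_le_div_iff₀ (mul_pos hnpos hn1pos) hn1pos]
      nlinarith [hFn.2]
    have hE1 : 1/((n:ℝ)+1)*(F (n+1) - F n) = F (n+1)/((n:ℝ)+1) - F n/((n:ℝ)+1) := by
      ring
    have hE2 : a*((∑ l ∈ Finset.Icc 1 n, 1 / (l:ℝ)) + 1/((n:ℝ)+1))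
        = a*(∑ l ∈ Finset.Icc 1 n, 1 / (l:ℝ)) + a/((n:ℝ)+1) := by ring
    linarith [ihh, key, hE1, hE2]

/-- summation-by-parts inequality from the proof of Theorem 2, item 2.
Let `S ≥ 1`, `a ≥ 0`, and let `F₀, F₁, …, F_S` be reals with `F₀ ≥ 0` and
`0 ≤ F_l ≤ l·a` for `1 ≤ l ≤ S`.  Then
`Σ_{l=1}^S (1/l)(F_l − F_{l−1}) ≤ a·Σ_{l=1}^S 1/l`. -/
theorem abel_summation_cdf_bound
    (S : ℕ) (hS : 0 < S) (a : ℝ) (ha : 0 ≤ a) (F : ℕ → ℝ)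
    (hF0 : 0 ≤ F 0)
    (hF : ∀ l, 1 ≤ l → l ≤ S → 0 ≤ F l ∧ F l ≤ (l : ℝ) * a) :
    ∑ l ∈ Finset.Icc 1 S, (1 / (l : ℝ)) * (F l - F (l - 1)) ≤
      a * ∑ l ∈ Finset.Icc 1 S, 1 / (l : ℝ) := by
  have h := abel_aux a ha F hF0 S hS hF
  have hFS := hF S hS le_rfl
  have hSpos : (0:ℝ) < S := by exact_mod_cast hS
  have : F S / S ≤ a := by
    rw [div_le_iff₀ hSpos]
    linarith [hFS.2]
  linarith
end

section
/- Assume the null independence-across-studies condition and that null p-values are stochastically at least uniform. Let S₁, S₂ be arbitrary selection rules, 𝒮_i = S_i(P_i), S_i = |𝒮_i|, α₂ = α−α₁. Then the FWER for replicability analysis of the Bonferroni replicability procedure, which rejects the features j ∈ 𝒮₁∩𝒮₂ with P_{1j} ≤ α₁/S₂ and P_{2j} ≤ α₂/S₁, is at most α₁·E[Σ_{j∈𝒮₂}(1−H_{1j})/S₂] + α₂·E[Σ_{j∈𝒮₁}(1−H_{2j})/S₁], where each fraction is interpreted as 0 when the corresponding selected set is empty. (The Section 4 upper bound quantifying the conservativeness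 of the non-adaptive procedure by the expected fractions of nulls among the selected.) -/
/-!
Split the rejection event according to which study has a null hypothesis at the rejected
feature. If `H₁ⱼ = 0`, then `P₁ⱼ` is independent of `P₂`, hence of the selected set
`𝒮₂ = S₂(P₂)`; on the event `𝒮₂ = T` the threshold `α₁ / |T|` is therefore a constant, and
`Pr(j ∈ 𝒮₂, P₁ⱼ ≤ α₁ / |𝒮₂|) ≤ ∑_{T ∋ j} (α₁ / |T|) Pr(𝒮₂ = T)`. Summing over the set `N₁` of null
features of study 1 and exchanging the sums gives `α₁ E[|𝒮₂ ∩ N₁| / |𝒮₂|]`. The features with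
`H₂ⱼ = 0` are handled symmetrically, and a union bound adds the two terms.
-/

open MeasureTheory ProbabilityTheory Finset

section

variable {Ω E ι : Type*} [MeasurableSpace Ω] [MeasurableSpace E] {μ : Measure Ω}

lemma measurableSet_setOf_eq_of_measurableSet_mem [Countable ι] {S : E → Finset ι}
    (hS : ∀ j, MeasurableSet {p | j ∈ S p}) (T : Finset ι) : MeasurableSet {p | S p = T} := by
  have hlevel : {p | S p = T} = ⋂ j, {p | j ∈ S p ↔ j ∈ T} := by
    ext p
    simp only [Set.mem_ofPred_eq, Set.mem_iInter, Finset.ext_iff]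
  rw [hlevel]
  exact MeasurableSet.iInter fun j => (hS j).iff (MeasurableSet.const _)

lemma measure_le_ofReal_of_forall_Icc [IsProbabilityMeasure μ] {X : Ω → ℝ}
    (h : ∀ x ∈ Set.Icc (0 : ℝ) 1, μ {ω | X ω ≤ x} ≤ ENNReal.ofReal x) (x : ℝ) :
    μ {ω | X ω ≤ x} ≤ ENNReal.ofReal x := by
  rcases lt_or_ge x 0 with hx0 | hx0
  · calc μ {ω | X ω ≤ x} ≤ μ {ω | X ω ≤ 0} :=
          measure_mono fun ω (hω : X ω ≤ x) => hω.trans hx0.le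
      _ ≤ ENNReal.ofReal 0 := h 0 ⟨le_rfl, zero_le_one⟩
      _ ≤ ENNReal.ofReal x := by simp
  rcases le_or_gt x 1 with hx1 | hx1
  · exact h x ⟨hx0, hx1⟩
  · exact prob_le_one.trans (by simpa using hx1.le)

lemma integral_comp_eq_sum_measureReal_preimage [IsFiniteMeasure μ] {α : Type*} [Fintype α]
    {X : Ω → α} (hX : ∀ a, MeasurableSet (X ⁻¹' {a})) (f : α → ℝ) :
    ∫ ω, f (X ω) ∂μ = ∑ a, μ.real (X ⁻¹' {a}) * f a := by
  classical
  have hsplit : (fun ω => f (X ω)) = fun ω => ∑ a, (X ⁻¹' {a}).indicator (fun _ => f a) ω := by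
    funext ω
    simp [Set.indicator_apply]
  rw [hsplit, integral_finsetSum _ fun a _ =>
    (integrable_indicator_iff (hX a)).2 (integrableOn_const (measure_ne_top μ _))]
  simp_rw [integral_indicator_const _ (hX _), smul_eq_mul]

lemma measure_selected_le_sum [Fintype ι] [DecidableEq ι] {Q : Ω → ℝ} {R : Ω → E}
    {S : E → Finset ι} (hS : ∀ j, MeasurableSet {p | j ∈ S p})
    (hunif : ∀ x, μ {ω | Q ω ≤ x} ≤ ENNReal.ofReal x) (hind : IndepFun Q R μ) (β : ℝ) (j : ι) :
    μ {ω | j ∈ S (R ω) ∧ Q ω ≤ β / #(S (R ω))} ≤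
      ∑ T with j ∈ T, ENNReal.ofReal (β / #T) * μ {ω | S (R ω) = T} := by
  have hcover : {ω | j ∈ S (R ω) ∧ Q ω ≤ β / #(S (R ω))} ⊆
      ⋃ T ∈ univ.filter (j ∈ ·), Q ⁻¹' Set.Iic (β / #T) ∩ R ⁻¹' {p | S p = T} :=
    fun ω hω => Set.mem_biUnion (mem_filter.2 ⟨mem_univ _, hω.1⟩) ⟨hω.2, rfl⟩
  refine (measure_mono hcover).trans <| (measure_biUnion_finset_le _ _).trans <|
    sum_le_sum fun T _ => ?_
  rw [hind.measure_inter_preimage_eq_mul _ _ measurableSet_Iic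
    (measurableSet_setOf_eq_of_measurableSet_mem hS T)]
  exact mul_le_mul_left (hunif _) _

theorem measure_exists_null_selected_le [IsProbabilityMeasure μ] [Fintype ι]
    (null : ι → Prop) [DecidablePred null] {Q : Ω → ι → ℝ} {R : Ω → E} (hR : Measurable R)
    {S : E → Finset ι} (hS : ∀ j, MeasurableSet {p | j ∈ S p})
    (hunif : ∀ j, null j → ∀ x ∈ Set.Icc (0 : ℝ) 1, μ {ω | Q ω j ≤ x} ≤ ENNReal.ofReal x)
    (hind : ∀ j, null j → IndepFun (fun ω => Q ω j) R μ) {β : ℝ} (hβ : 0 ≤ β) :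
    μ {ω | ∃ j, null j ∧ j ∈ S (R ω) ∧ Q ω j ≤ β / #(S (R ω))} ≤
      ENNReal.ofReal (β * ∫ ω, (#((S (R ω)).filter null) : ℝ) / #(S (R ω)) ∂μ) := by
  classical
  have hcover : {ω | ∃ j, null j ∧ j ∈ S (R ω) ∧ Q ω j ≤ β / #(S (R ω))} ⊆
      ⋃ j ∈ univ.filter null, {ω | j ∈ S (R ω) ∧ Q ω j ≤ β / #(S (R ω))} := by
    rintro ω ⟨j, hj, hω⟩
    exact Set.mem_biUnion (mem_filter.2 ⟨mem_univ _, hj⟩) hω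
  have hlevel : ∀ T, MeasurableSet ((fun ω => S (R ω)) ⁻¹' {T}) :=
    fun T => hR (measurableSet_setOf_eq_of_measurableSet_mem hS T)
  calc μ {ω | ∃ j, null j ∧ j ∈ S (R ω) ∧ Q ω j ≤ β / #(S (R ω))}
      ≤ ∑ j with null j, μ {ω | j ∈ S (R ω) ∧ Q ω j ≤ β / #(S (R ω))} :=
        (measure_mono hcover).trans (measure_biUnion_finset_le _ _)
    _ ≤ ∑ j with null j, ∑ T with j ∈ T, ENNReal.ofReal (β / #T) * μ {ω | S (R ω) = T} :=
        sum_le_sum fun j hj => measure_selected_le_sum hS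
          (measure_le_ofReal_of_forall_Icc (hunif j (mem_filter.1 hj).2))
          (hind j (mem_filter.1 hj).2) β j
    _ = ∑ T, #(T.filter null) * (ENNReal.ofReal (β / #T) * μ {ω | S (R ω) = T}) := by
        rw [sum_comm' (s' := fun T => T.filter null) (t' := univ) (by simp [and_comm])]
        simp only [sum_const, nsmul_eq_mul]
    _ = ∑ T, ENNReal.ofReal (β * (#(T.filter null) / #T)) * μ {ω | S (R ω) = T} := by
        refine sum_congr rfl fun T _ => ?_
        rw [← mul_assoc, ← ENNReal.ofReal_natCast, ← ENNReal.ofReal_mul (by positivity)]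
        ring_nf
    _ = ENNReal.ofReal (β * ∫ ω, (#((S (R ω)).filter null) : ℝ) / #(S (R ω)) ∂μ) := by
        rw [integral_comp_eq_sum_measureReal_preimage (X := fun ω => S (R ω)) hlevel
          (fun T => (#(T.filter null) : ℝ) / #T), mul_sum,
          ENNReal.ofReal_sum_of_nonneg fun T _ => by positivity]
        refine sum_congr rfl fun T _ => ?_
        rw [mul_left_comm, ENNReal.ofReal_mul measureReal_nonneg, measureReal_def,
          ENNReal.ofReal_toReal (measure_ne_top μ _), mul_comm]
        rfl

end

theorem bonferroni_replicability_fwer_adaptive_bound_general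
    {Ω : Type*} [MeasurableSpace Ω] (μ : Measure Ω) [IsProbabilityMeasure μ]
    (m : ℕ) (P1 P2 : Ω → Fin m → ℝ) (hP1 : Measurable P1) (hP2 : Measurable P2)
    (H1 H2 : Fin m → Bool)
    -- null p-values are stochastically at least uniform
    (hunif1 : ∀ j, H1 j = false → ∀ x ∈ Set.Icc (0:ℝ) 1,
      μ {ω | P1 ω j ≤ x} ≤ ENNReal.ofReal x)
    (hunif2 : ∀ j, H2 j = false → ∀ x ∈ Set.Icc (0:ℝ) 1,
      μ {ω | P2 ω j ≤ x} ≤ ENNReal.ofReal x)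
    -- null independence-across-studies condition
    (hind1 : ∀ j, (H1 j = false ∨ H2 j = false) → H1 j = false →
      IndepFun (fun ω => P1 ω j) P2 μ)
    (hind2 : ∀ j, (H1 j = false ∨ H2 j = false) → H2 j = false →
      IndepFun (fun ω => P2 ω j) P1 μ)
    -- arbitrary (measurable) selection rules
    (S1 S2 : (Fin m → ℝ) → Finset (Fin m))
    (hS1 : ∀ j, MeasurableSet {p : Fin m → ℝ | j ∈ S1 p})
    (hS2 : ∀ j, MeasurableSet {p : Fin m → ℝ | j ∈ S2 p})
    (α α₁ : ℝ) (hα₁ : α₁ ∈ Set.Ioo (0:ℝ) α) :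
    μ {ω | ∃ j, (H1 j = false ∨ H2 j = false) ∧
        j ∈ S1 (P1 ω) ∧ j ∈ S2 (P2 ω) ∧
        P1 ω j ≤ α₁ / (S2 (P2 ω)).card ∧ P2 ω j ≤ (α - α₁) / (S1 (P1 ω)).card}
      ≤ ENNReal.ofReal
        (α₁ * ∫ ω, (((S2 (P2 ω)).filter (fun j => H1 j = false)).card : ℝ) /
            ((S2 (P2 ω)).card : ℝ) ∂μ +
         (α - α₁) * ∫ ω, (((S1 (P1 ω)).filter (fun j => H2 j = false)).card : ℝ) /
            ((S1 (P1 ω)).card : ℝ) ∂μ) := by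
  obtain ⟨hα₁_pos, hα₁_lt⟩ := hα₁
  have hα₂_nonneg : 0 ≤ α - α₁ := sub_nonneg.2 hα₁_lt.le
  calc _ ≤ μ ({ω | ∃ j, H1 j = false ∧ j ∈ S2 (P2 ω) ∧ P1 ω j ≤ α₁ / #(S2 (P2 ω))} ∪
          {ω | ∃ j, H2 j = false ∧ j ∈ S1 (P1 ω) ∧ P2 ω j ≤ (α - α₁) / #(S1 (P1 ω))}) := by
        refine measure_mono ?_
        rintro ω ⟨j, hnull | hnull, hj1, hj2, hp1, hp2⟩
        exacts [Or.inl ⟨j, hnull, hj2, hp1⟩, Or.inr ⟨j, hnull, hj1, hp2⟩]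
    _ ≤ _ := (measure_union_le _ _).trans (add_le_add
        (measure_exists_null_selected_le _ hP2 hS2 hunif1
          (fun j hj => hind1 j (Or.inl hj) hj) hα₁_pos.le)
        (measure_exists_null_selected_le _ hP1 hS1 hunif2
          (fun j hj => hind2 j (Or.inr hj) hj) hα₂_nonneg))
    _ = _ := (ENNReal.ofReal_add (by positivity) (by positivity)).symm

/-- Section 4 conservativeness bound.  Under the null
independence-across-studies condition and null p-values stochastically at least uniform,
the FWER for replicability analysis of the Bonferroni replicability procedure (rejecting
`j ∈ 𝒮₁ ∩ 𝒮₂` with `P1 j ≤ α₁/S₂` and `P2 j ≤ (α−α₁)/S₁`) is at most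
`α₁·E[Σ_{j∈𝒮₂}(1−H_{1j})/S₂] + (α−α₁)·E[Σ_{j∈𝒮₁}(1−H_{2j})/S₁]`, each fraction being
`0` when the corresponding selected set is empty (the convention of division by zero). -/
theorem bonferroni_replicability_fwer_adaptive_bound
    {Ω : Type*} [MeasurableSpace Ω] (μ : Measure Ω) [IsProbabilityMeasure μ]
    (m : ℕ) (P1 P2 : Ω → Fin m → ℝ) (hP1 : Measurable P1) (hP2 : Measurable P2)
    (H1 H2 : Fin m → Bool)
    (hrange1 : ∀ ω j, P1 ω j ∈ Set.Icc (0:ℝ) 1) (hrange2 : ∀ ω j, P2 ω j ∈ Set.Icc (0:ℝ) 1)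
    -- null p-values are stochastically at least uniform
    (hunif1 : ∀ j, H1 j = false → ∀ x ∈ Set.Icc (0:ℝ) 1,
      μ {ω | P1 ω j ≤ x} ≤ ENNReal.ofReal x)
    (hunif2 : ∀ j, H2 j = false → ∀ x ∈ Set.Icc (0:ℝ) 1,
      μ {ω | P2 ω j ≤ x} ≤ ENNReal.ofReal x)
    -- null independence-across-studies condition
    (hind1 : ∀ j, (H1 j = false ∨ H2 j = false) → H1 j = false →
      IndepFun (fun ω => P1 ω j) P2 μ)
    (hind2 : ∀ j, (H1 j = false ∨ H2 j = false) → H2 j = false →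
      IndepFun (fun ω => P2 ω j) P1 μ)
    -- arbitrary (measurable) selection rules
    (S1 S2 : (Fin m → ℝ) → Finset (Fin m))
    (hS1 : ∀ j, MeasurableSet {p : Fin m → ℝ | j ∈ S1 p})
    (hS2 : ∀ j, MeasurableSet {p : Fin m → ℝ | j ∈ S2 p})
    (α α₁ : ℝ) (hα : α ∈ Set.Ioo (0:ℝ) 1) (hα₁ : α₁ ∈ Set.Ioo (0:ℝ) α) :
    μ {ω | ∃ j, (H1 j = false ∨ H2 j = false) ∧
        j ∈ S1 (P1 ω) ∧ j ∈ S2 (P2 ω) ∧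
        P1 ω j ≤ α₁ / (S2 (P2 ω)).card ∧ P2 ω j ≤ (α - α₁) / (S1 (P1 ω)).card}
      ≤ ENNReal.ofReal
        (α₁ * ∫ ω, (((S2 (P2 ω)).filter (fun j => H1 j = false)).card : ℝ) /
            ((S2 (P2 ω)).card : ℝ) ∂μ +
         (α - α₁) * ∫ ω, (((S1 (P1 ω)).filter (fun j => H2 j = false)).card : ℝ) /
            ((S1 (P1 ω)).card : ℝ) ∂μ) :=
  bonferroni_replicability_fwer_adaptive_bound_general μ m P1 P2 hP1 hP2 H1 H2 hunif1 hunif2 hind1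
    hind2 S1 S2 hS1 hS2 α α₁ hα₁
end

section
/- Let p₁, p₂ ∈ [0,1]^m be fixed p-value vectors, α₁, α₂ > 0, and for t ∈ [0,1] let 𝒮_i(t) = {j : p_{ij} ≤ t} and S_i(t) = |𝒮_i(t)|. Suppose (t₁*, t₂*) satisfies t₁* = |𝒮₁(t₁*) ∩ 𝒮₂(t₂*)|·α₁/S₂(t₂*) and t₂* = |𝒮₁(t₁*) ∩ 𝒮₂(t₂*)|·α₂/S₁(t₁*), with S₁(t₁*) ≥ 1 and S₂(t₂*) ≥ 1. Write k = |𝒮₁(t₁*) ∩ 𝒮₂(t₂*)|. Then R := max{r ∈ ℕ : #{j ∈ 𝒮₁(t₁*) ∩ 𝒮₂(t₂*) : p_{1j} ≤ rα₁/S₂(t₂*) and p_{2j} ≤ rα₂/S₁(t₁*)} = r} equals k, and the rejection set {j ∈ 𝒮₁(t₁*) ∩ 𝒮₂(t₂*) : p_{1j} ≤ Rα₁/S₂(t₂*) and p_{2j} ≤ Rα₂/S₁(t₁*)} equals {j : p_{1j} ≤ t₁* and p_{2j} ≤ t₂*}. (The deterministic fixed-point identity used in the proof of Theorem 6: when the selection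 thresholds solve the FDR fixed-point equations, the step-up procedure rejects exactly the selected features.) -/
/-- fixed-point identity used in the proof of Theorem 6.  Let
`p1, p2 ∈ [0,1]^m` be fixed, `α₁, α₂ > 0`, and `𝒮_i(t) = {j : p_{ij} ≤ t}` with
`S_i(t) = |𝒮_i(t)|`.  If `(t₁*, t₂*)` satisfies the FDR fixed-point equations
`t₁* = k·α₁/S₂(t₂*)` and `t₂* = k·α₂/S₁(t₁*)` with `k = |𝒮₁(t₁*) ∩ 𝒮₂(t₂*)|`,
`S₁(t₁*) ≥ 1` and `S₂(t₂*) ≥ 1`, then the step-up count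
`R = max{r : #{j ∈ 𝒮₁(t₁*)∩𝒮₂(t₂*) : p_{1j} ≤ rα₁/S₂(t₂*) ∧ p_{2j} ≤ rα₂/S₁(t₁*)} = r}`
equals `k`, and the step-up rejection set equals `{j : p_{1j} ≤ t₁* ∧ p_{2j} ≤ t₂*}`. -/
theorem stepup_fixed_point_rejects_selected
    (m : ℕ) (p1 p2 : Fin m → ℝ)
    (hp1 : ∀ j, p1 j ∈ Set.Icc (0:ℝ) 1) (hp2 : ∀ j, p2 j ∈ Set.Icc (0:ℝ) 1)
    (α₁ α₂ : ℝ) (hα₁ : 0 < α₁) (hα₂ : 0 < α₂)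
    (t1 t2 : ℝ)
    (hS1 : 1 ≤ Nat.card {j : Fin m // p1 j ≤ t1})
    (hS2 : 1 ≤ Nat.card {j : Fin m // p2 j ≤ t2})
    (ht1 : t1 = (Nat.card {j : Fin m // p1 j ≤ t1 ∧ p2 j ≤ t2} : ℝ) * α₁ /
      (Nat.card {j : Fin m // p2 j ≤ t2} : ℝ))
    (ht2 : t2 = (Nat.card {j : Fin m // p1 j ≤ t1 ∧ p2 j ≤ t2} : ℝ) * α₂ /
      (Nat.card {j : Fin m // p1 j ≤ t1} : ℝ)) :
    let R : ℕ := sSup {r : ℕ |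
      Nat.card {j : Fin m // (p1 j ≤ t1 ∧ p2 j ≤ t2) ∧
        p1 j ≤ (r : ℝ) * α₁ / (Nat.card {j : Fin m // p2 j ≤ t2} : ℝ) ∧
        p2 j ≤ (r : ℝ) * α₂ / (Nat.card {j : Fin m // p1 j ≤ t1} : ℝ)} = r}
    R = Nat.card {j : Fin m // p1 j ≤ t1 ∧ p2 j ≤ t2} ∧
    {j : Fin m | (p1 j ≤ t1 ∧ p2 j ≤ t2) ∧
        p1 j ≤ (R : ℝ) * α₁ / (Nat.card {j : Fin m // p2 j ≤ t2} : ℝ) ∧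
        p2 j ≤ (R : ℝ) * α₂ / (Nat.card {j : Fin m // p1 j ≤ t1} : ℝ)} =
      {j : Fin m | p1 j ≤ t1 ∧ p2 j ≤ t2} := by
  intro R
  set k := Nat.card {j : Fin m // p1 j ≤ t1 ∧ p2 j ≤ t2} with hkdef
  have hkmem : Nat.card {j : Fin m // (p1 j ≤ t1 ∧ p2 j ≤ t2) ∧
      p1 j ≤ (k : ℝ) * α₁ / (Nat.card {j : Fin m // p2 j ≤ t2} : ℝ) ∧
      p2 j ≤ (k : ℝ) * α₂ / (Nat.card {j : Fin m // p1 j ≤ t1} : ℝ)} = k := by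
    rw [hkdef]
    apply Nat.card_congr
    apply Equiv.subtypeEquivRight
    intro j
    constructor
    · exact fun h => h.1
    · intro h
      exact ⟨h, by rw [← ht1]; exact h.1, by rw [← ht2]; exact h.2⟩
  have hbound : ∀ r ∈ {r : ℕ |
      Nat.card {j : Fin m // (p1 j ≤ t1 ∧ p2 j ≤ t2) ∧
        p1 j ≤ (r : ℝ) * α₁ / (Nat.card {j : Fin m // p2 j ≤ t2} : ℝ) ∧
        p2 j ≤ (r : ℝ) * α₂ / (Nat.card {j : Fin m // p1 j ≤ t1} : ℝ)} = r}, r ≤ k := by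
    intro r hr
    have := hr
    simp only [Set.mem_setOf_eq] at this
    rw [← this, hkdef]
    exact Nat.card_le_card_of_injective (fun x => ⟨x.1, x.2.1⟩)
      (fun a b hab => by cases a; cases b; simpa [Subtype.ext_iff] using hab)
  have hR : R = k := by
    show sSup _ = k
    apply le_antisymm
    · exact csSup_le ⟨k, hkmem⟩ hbound
    · exact le_csSup ⟨k, hbound⟩ hkmem
  refine ⟨hR, ?_⟩
  rw [hR]
  ext j
  simp only [Set.mem_setOf_eq]
  constructor
  · exact fun h => h.1
  · intro h
    exact ⟨h, by rw [← ht1]; exact h.1, by rw [← ht2]; exact h.2⟩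
end
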